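/- arXiv:0912.2342 — 7 statements merged into one kernel-verified Lean document; each statement's English description precedes it below -/
import Mathlib

section
/- Let F_q be a finite field with q elements. The number of solutions (x₁, x₂, x₁', x₂') ∈ F_q⁴ of the system x₁·x₁' = 1 + x₂ and x₂·x₂' = 1 + x₁ equals q² + 1. -/
theorem stmt_1 (F : Type*) [Field F] [Fintype F] :
    Nat.card {p : F × F × F × F //
      p.1 * p.2.2.1 = 1 + p.2.1 ∧ p.2.1 * p.2.2.2 = 1 + p.1} =
    Fintype.card F ^ 2 + 1 := by
  classical
  let f : (Fˣ × Fˣ) ⊕ F ⊕ F → {p : F × F × F × F //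
      p.1 * p.2.2.1 = 1 + p.2.1 ∧ p.2.1 * p.2.2.2 = 1 + p.1} := fun x =>
    match x with
    | .inl (u, v) => ⟨((u : F), (v : F), (1 + v) / u, (1 + u) / v), by
        constructor <;> field_simp⟩
    | .inr (.inl a) => ⟨(0, -1, a, -1), by norm_num⟩
    | .inr (.inr b) => ⟨(-1, 0, -1, b), by norm_num⟩
  have hbij : Function.Bijective f := by
    constructor
    · rintro (⟨u, v⟩ | a | b) (⟨u', v'⟩ | a' | b') h <;>
        simp only [f, Subtype.mk.injEq, Prod.mk.injEq] at h
      · obtain ⟨h1, h2, -⟩ := h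
        simp [Prod.ext_iff, Units.ext_iff, h1, h2]
      · exact absurd h.1 u.ne_zero
      · exact absurd h.2.1 v.ne_zero
      · exact absurd h.1.symm u'.ne_zero
      · simp [h.2.2.1]
      · exact absurd h.1 (by simpa using (neg_ne_zero.mpr (one_ne_zero (α := F))).symm)
      · exact absurd h.2.1.symm v'.ne_zero
      · exact absurd h.1 (by simpa using (neg_ne_zero.mpr (one_ne_zero (α := F))))
      · simp [h.2.2.2]
    · rintro ⟨⟨a, b, c, d⟩, h1, h2⟩
      simp only at h1 h2
      by_cases ha : a = 0
      · subst ha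
        have hb : b = -1 := by linear_combination -h1
        subst hb
        have hd : d = -1 := by linear_combination -h2
        subst hd
        exact ⟨.inr (.inl c), rfl⟩
      · by_cases hb : b = 0
        · subst hb
          have hA : a = -1 := by linear_combination -h2
          subst hA
          have hc : c = -1 := by linear_combination -h1
          subst hc
          exact ⟨.inr (.inr d), rfl⟩
        · refine ⟨.inl (Units.mk0 a ha, Units.mk0 b hb), ?_⟩
          simp only [f, Units.val_mk0, Subtype.mk.injEq, Prod.mk.injEq]
          refine ⟨trivial, trivial, ?_, ?_⟩
          · field_simp; linear_combination -h1
          · field_simp; linear_combination -h2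
  rw [← Nat.card_congr (Equiv.ofBijective f hbij)]
  simp only [Nat.card_eq_fintype_card, Fintype.card_sum, Fintype.card_prod,
    Fintype.card_units]
  have hq : 1 ≤ Fintype.card F := Fintype.card_pos
  obtain ⟨k, hk⟩ := Nat.exists_eq_add_of_le hq
  rw [hk, show 1 + k - 1 = k from by omega]; ring_nf
end

section
/- Let F_q be a finite field with q elements and α ∈ F_q^*. The number of solutions (x₁, x₂, x₃, x₁', x₂', x₃') ∈ F_q⁶ of the system x₁·x₁' = 1 + α·x₂, x₂·x₂' = 1 + x₁·x₃, x₃·x₃' = 1 + x₂ equals (q^{(3+1)/2}-1)(q^{(3+3)/2}-1)/(q²-1) = q³-1 if α ≠ 1, and q³-1+q² if α = 1. -/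
open Finset

section Aux

variable {F : Type*} [Field F] [Fintype F] [DecidableEq F]

/-- number of solutions y of a*y = c -/
def gg (q : ℕ) (a c : F) : ℕ := if a = 0 then (if c = 0 then q else 0) else 1

lemma count_lin (a c : F) :
    (∑ y : F, if a * y = c then 1 else 0) = gg (Fintype.card F) a c := by
  unfold gg
  by_cases ha : a = 0
  · subst ha
    by_cases hc : c = 0 <;> simp [hc, eq_comm, Finset.card_univ]
  · have h : ∀ y : F, (a * y = c) ↔ y = a⁻¹ * c := fun y => by
      rw [show c = a * (a⁻¹ * c) by field_simp, mul_right_inj' ha]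
      simp [ha]
    simp [h, ha]

lemma sum3 (f g h : F → ℕ) :
    (∑ a : F, ∑ b : F, ∑ c : F, f a * (g b * h c)) =
      (∑ a : F, f a) * ((∑ b : F, g b) * (∑ c : F, h c)) := by
  have h1 : ∀ a, (∑ b : F, ∑ c : F, f a * (g b * h c))
      = f a * ((∑ b : F, g b) * (∑ c : F, h c)) := by
    intro a
    rw [Finset.sum_mul_sum]
    simp [Finset.mul_sum]
  simp only [h1, ← Finset.sum_mul]

lemma sum_ite_const (c : F) (a b : ℕ) :
    ∑ x : F, (if x = c then a else b) = a + (Fintype.card F - 1) * b := by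
  rw [← Finset.add_sum_erase _ _ (Finset.mem_univ c), if_pos rfl]
  congr 1
  rw [Finset.sum_congr rfl (fun x hx => if_neg (Finset.mem_erase.1 hx).1),
    Finset.sum_const, Finset.card_erase_of_mem (Finset.mem_univ c),
    Finset.card_univ, smul_eq_mul]

lemma inner3 (x₁ x₂ : F) :
    (∑ x₃ : F, gg (Fintype.card F) x₂ (1 + x₁ * x₃) * gg (Fintype.card F) x₃ (1 + x₂)) =
      if x₂ = 0 then (if x₁ = 0 then 0 else Fintype.card F)
      else ((if x₂ = -1 then Fintype.card F else 0) + (Fintype.card F - 1)) := by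
  set q := Fintype.card F with hq
  by_cases h2 : x₂ = 0
  · subst h2
    rw [if_pos rfl]
    by_cases h1 : x₁ = 0
    · subst h1
      simp [gg]
    · rw [if_neg h1]
      rw [Finset.sum_eq_single (-x₁⁻¹)]
      · have hne : (-x₁⁻¹ : F) ≠ 0 := neg_ne_zero.2 (inv_ne_zero h1)
        simp [gg, hne, mul_inv_cancel₀ h1]
      · intro b _ hb
        have hb0 : 1 + x₁ * b ≠ 0 := by
          intro h
          apply hb
          have : x₁ * b = x₁ * -x₁⁻¹ := by
            rw [mul_neg, mul_inv_cancel₀ h1]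
            linear_combination h
          exact mul_left_cancel₀ h1 this
        simp [gg, hb0]
      · intro h; exact absurd (Finset.mem_univ _) h
  · rw [if_neg h2]
    have hpt : ∀ x₃ : F, gg q x₂ (1 + x₁ * x₃) * gg q x₃ (1 + x₂)
        = if x₃ = 0 then (if x₂ = -1 then q else 0) else 1 := by
      intro x₃
      have he : (1 + x₂ = 0) = (x₂ = -1) := propext (by rw [add_comm, add_eq_zero_iff_eq_neg])
      simp [gg, h2, he]
    rw [Finset.sum_congr rfl (fun x₃ _ => hpt x₃), sum_ite_const, mul_one]

lemma inner2 (α : F) (hα : α ≠ 0) (x₂ : F) :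
    (∑ x₁ : F, gg (Fintype.card F) x₁ (1 + α * x₂) *
      (if x₂ = 0 then (if x₁ = 0 then 0 else Fintype.card F)
       else ((if x₂ = -1 then Fintype.card F else 0) + (Fintype.card F - 1)))) =
      if x₂ = 0 then (Fintype.card F - 1) * Fintype.card F
      else (((if x₂ = -α⁻¹ then Fintype.card F else 0) + (Fintype.card F - 1)) *
            ((if x₂ = -1 then Fintype.card F else 0) + (Fintype.card F - 1))) := by
  set q := Fintype.card F with hq
  by_cases h2 : x₂ = 0
  · subst h2
    rw [if_pos rfl]
    have hpt : ∀ x₁ : F, gg q x₁ (1 + α * 0) * (if x₁ = 0 then 0 else q)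
        = if x₁ = 0 then 0 else q := by
      intro x₁
      by_cases h1 : x₁ = 0 <;> simp [gg, h1]
    rw [Finset.sum_congr rfl (fun x₁ _ => by rw [if_pos rfl, hpt x₁]), sum_ite_const,
      zero_add]
  · rw [if_neg h2]
    have hpt : ∀ x₁ : F, gg q x₁ (1 + α * x₂) *
        (if x₂ = 0 then (if x₁ = 0 then 0 else q) else ((if x₂ = -1 then q else 0) + (q - 1)))
        = gg q x₁ (1 + α * x₂) * ((if x₂ = -1 then q else 0) + (q - 1)) := by
      intro x₁; rw [if_neg h2]
    rw [Finset.sum_congr rfl (fun x₁ _ => hpt x₁), ← Finset.sum_mul]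
    congr 1
    have he : (1 + α * x₂ = 0) = (x₂ = -α⁻¹) := by
      refine propext ?_
      rw [add_comm, add_eq_zero_iff_eq_neg,
        show (-1 : F) = α * -α⁻¹ by rw [mul_neg, mul_inv_cancel₀ hα],
        mul_right_inj' hα]
    have hpt2 : ∀ x₁ : F, gg q x₁ (1 + α * x₂)
        = if x₁ = 0 then (if x₂ = -α⁻¹ then q else 0) else 1 := by
      intro x₁; simp [gg, he]
    rw [Finset.sum_congr rfl (fun x₁ _ => hpt2 x₁), sum_ite_const, mul_one]

lemma outer (α : F) (hα : α ≠ 0) :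
    (∑ x₂ : F, (if x₂ = 0 then (Fintype.card F - 1) * Fintype.card F
      else (((if x₂ = -α⁻¹ then Fintype.card F else 0) + (Fintype.card F - 1)) *
            ((if x₂ = -1 then Fintype.card F else 0) + (Fintype.card F - 1))))) =
      Fintype.card F ^ 3 - 1 + (if α = 1 then Fintype.card F ^ 2 else 0) := by
  set q := Fintype.card F with hq
  rw [← Finset.add_sum_erase _ _ (Finset.mem_univ (0 : F)), if_pos rfl]
  have hstep : ∀ x ∈ Finset.univ.erase (0 : F),
      (if x = 0 then (q - 1) * q
       else (((if x = -α⁻¹ then q else 0) + (q - 1)) * ((if x = -1 then q else 0) + (q - 1))))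
      = ((if x = -α⁻¹ then q else 0) * (if x = -1 then q else 0)
         + (if x = -α⁻¹ then q else 0) * (q - 1))
        + ((q - 1) * (if x = -1 then q else 0) + (q - 1) * (q - 1)) := by
    intro x hx
    rw [if_neg (Finset.mem_erase.1 hx).1, add_mul, mul_add, mul_add]
  rw [Finset.sum_congr rfl hstep, Finset.sum_add_distrib, Finset.sum_add_distrib,
    Finset.sum_add_distrib]
  have hm1 : (-1 : F) ∈ Finset.univ.erase (0 : F) :=
    Finset.mem_erase.2 ⟨neg_ne_zero.2 one_ne_zero, Finset.mem_univ _⟩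
  have hma : (-α⁻¹ : F) ∈ Finset.univ.erase (0 : F) :=
    Finset.mem_erase.2 ⟨neg_ne_zero.2 (inv_ne_zero hα), Finset.mem_univ _⟩
  have s2 : (∑ x ∈ Finset.univ.erase (0 : F), (if x = -α⁻¹ then q else 0) * (q - 1))
      = q * (q - 1) := by
    rw [Finset.sum_congr rfl (fun x _ => by rw [ite_mul, zero_mul]),
      Finset.sum_ite_eq' _ _ (fun _ => q * (q - 1)), if_pos hma]
  have s3 : (∑ x ∈ Finset.univ.erase (0 : F), (q - 1) * (if x = -1 then q else 0))
      = (q - 1) * q := by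
    rw [Finset.sum_congr rfl (fun x _ => by rw [mul_ite, mul_zero]),
      Finset.sum_ite_eq' _ _ (fun _ => (q - 1) * q), if_pos hm1]
  have s4 : (∑ _x ∈ Finset.univ.erase (0 : F), (q - 1) * (q - 1))
      = (q - 1) * ((q - 1) * (q - 1)) := by
    rw [Finset.sum_const, Finset.card_erase_of_mem (Finset.mem_univ _), Finset.card_univ,
      smul_eq_mul]
  rw [s2, s3, s4]
  have hq1 : 1 ≤ q := Fintype.card_pos
  obtain ⟨k, hk⟩ : ∃ k, q = k + 1 := ⟨q - 1, by omega⟩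
  by_cases h1 : α = 1
  · subst h1
    have s1 : (∑ x ∈ Finset.univ.erase (0 : F),
        (if x = -(1 : F)⁻¹ then q else 0) * (if x = -1 then q else 0)) = q * q := by
      have : ∀ x : F, (if x = -(1 : F)⁻¹ then q else 0) * (if x = -1 then q else 0)
          = if x = -1 then q * q else 0 := by
        intro x
        simp only [inv_one]
        split_ifs <;> simp
      rw [Finset.sum_congr rfl (fun x _ => this x),
        Finset.sum_ite_eq' _ _ (fun _ => q * q), if_pos hm1]
    rw [s1, if_pos rfl, hk]
    have h3 : (k + 1) ^ 3 = (k ^ 3 + 3 * k ^ 2 + 3 * k) + 1 := by ring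
    have h2 : (k + 1) ^ 2 = k ^ 2 + 2 * k + 1 := by ring
    rw [h3, Nat.add_sub_cancel, Nat.add_sub_cancel, h2]
    ring
  · have s1 : (∑ x ∈ Finset.univ.erase (0 : F),
        (if x = -α⁻¹ then q else 0) * (if x = -1 then q else 0)) = 0 := by
      have hz : ∀ x : F, (if x = -α⁻¹ then q else 0) * (if x = -1 then q else 0) = 0 := by
        intro x
        by_cases ha : x = -α⁻¹
        · by_cases hb : x = -1
          · exfalso
            apply h1
            have h2 : α⁻¹ = 1 := neg_injective (by rw [← ha, hb])
            rw [← inv_inv α, h2, inv_one]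
          · simp [hb]
        · simp [ha]
      rw [Finset.sum_congr rfl (fun x _ => hz x), Finset.sum_const_zero]
    rw [s1, if_neg h1, hk]
    have h3 : (k + 1) ^ 3 = (k ^ 3 + 3 * k ^ 2 + 3 * k) + 1 := by ring
    rw [h3, Nat.add_sub_cancel, Nat.add_sub_cancel]
    ring

end Aux

-- variables ordered (x₁, x₂, x₃, x₁', x₂', x₃')
theorem stmt_2 (F : Type*) [Field F] [Fintype F] (α : F) (hα : α ≠ 0) :
    (α ≠ 1 → Nat.card {p : F × F × F × F × F × F //
        p.1 * p.2.2.2.1 = 1 + α * p.2.1 ∧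
        p.2.1 * p.2.2.2.2.1 = 1 + p.1 * p.2.2.1 ∧
        p.2.2.1 * p.2.2.2.2.2 = 1 + p.2.1} = Fintype.card F ^ 3 - 1) ∧
    (α = 1 → Nat.card {p : F × F × F × F × F × F //
        p.1 * p.2.2.2.1 = 1 + α * p.2.1 ∧
        p.2.1 * p.2.2.2.2.1 = 1 + p.1 * p.2.2.1 ∧
        p.2.2.1 * p.2.2.2.2.2 = 1 + p.2.1} =
      Fintype.card F ^ 3 - 1 + Fintype.card F ^ 2) := by
  classical
  have hcard : Nat.card {p : F × F × F × F × F × F //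
        p.1 * p.2.2.2.1 = 1 + α * p.2.1 ∧
        p.2.1 * p.2.2.2.2.1 = 1 + p.1 * p.2.2.1 ∧
        p.2.2.1 * p.2.2.2.2.2 = 1 + p.2.1} =
      Fintype.card F ^ 3 - 1 + (if α = 1 then Fintype.card F ^ 2 else 0) := by
    have hmid : (∑ x₁ : F, ∑ x₂ : F, ∑ x₃ : F, ∑ y₁ : F, ∑ y₂ : F, ∑ y₃ : F,
        if x₁ * y₁ = 1 + α * x₂ ∧ x₂ * y₂ = 1 + x₁ * x₃ ∧ x₃ * y₃ = 1 + x₂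
        then 1 else 0) =
        ∑ x₁ : F, ∑ x₂ : F, ∑ x₃ : F,
          gg (Fintype.card F) x₁ (1 + α * x₂) *
          (gg (Fintype.card F) x₂ (1 + x₁ * x₃) * gg (Fintype.card F) x₃ (1 + x₂)) := by
      refine Finset.sum_congr rfl fun x₁ _ => Finset.sum_congr rfl fun x₂ _ =>
        Finset.sum_congr rfl fun x₃ _ => ?_
      have e1 : (∑ y₁ : F, ∑ y₂ : F, ∑ y₃ : F,
          if x₁ * y₁ = 1 + α * x₂ ∧ x₂ * y₂ = 1 + x₁ * x₃ ∧ x₃ * y₃ = 1 + x₂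
          then 1 else 0) =
          ∑ y₁ : F, ∑ y₂ : F, ∑ y₃ : F,
            (if x₁ * y₁ = 1 + α * x₂ then 1 else 0) *
            ((if x₂ * y₂ = 1 + x₁ * x₃ then 1 else 0) *
             (if x₃ * y₃ = 1 + x₂ then 1 else 0)) :=
        Finset.sum_congr rfl fun y₁ _ => Finset.sum_congr rfl fun y₂ _ =>
          Finset.sum_congr rfl fun y₃ _ => by split_ifs <;> simp_all
      exact e1.trans (by
        rw [sum3 (fun y => if x₁ * y = 1 + α * x₂ then 1 else 0)
            (fun y => if x₂ * y = 1 + x₁ * x₃ then 1 else 0)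
            (fun y => if x₃ * y = 1 + x₂ then 1 else 0),
          count_lin, count_lin, count_lin])
    rw [Nat.card_eq_fintype_card, Fintype.card_subtype, Finset.card_filter]
    simp only [Fintype.sum_prod_type]
    beta_reduce
    rw [hmid]
    rw [Finset.sum_comm]
    have st1 : ∀ x₂ : F, (∑ x₁ : F, ∑ x₃ : F,
        gg (Fintype.card F) x₁ (1 + α * x₂) *
          (gg (Fintype.card F) x₂ (1 + x₁ * x₃) * gg (Fintype.card F) x₃ (1 + x₂))) =
        ∑ x₁ : F, gg (Fintype.card F) x₁ (1 + α * x₂) *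
          (if x₂ = 0 then (if x₁ = 0 then 0 else Fintype.card F)
           else ((if x₂ = -1 then Fintype.card F else 0) + (Fintype.card F - 1))) := by
      intro x₂
      refine Finset.sum_congr rfl fun x₁ _ => ?_
      rw [← Finset.mul_sum, inner3]
    rw [Finset.sum_congr rfl (fun x₂ _ => (st1 x₂).trans (inner2 α hα x₂)), outer α hα]
  constructor
  · intro h
    rw [hcard, if_neg h, add_zero]
  · intro h
    rw [hcard, if_pos h]
end

section
/- Let F_q be a finite field with q elements. The number of solutions in F_q⁸ of the system x₁·x₁' = 1 + x₂, x₂·x₂' = 1 + x₁·x₃, x₃·x₃' = 1 + x₂·x₄, x₄·x₄' = 1 + x₃ equals q⁴ + q² + 1. -/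
/-!
Fix the middle unknowns `u = x₂`, `v = x₃`. The system then splits into two independent copies
of `x * x' = 1 + u, u * y = 1 + x * v`: one in `(x₁, x₁', x₂')`, the other in `(x₄, x₄', x₃')`
with `u` and `v` swapped. For `u ≠ 0` the second equation determines `y`, leaving the points of
the hyperbola `x * x' = 1 + u`; for `u = 0` it forces `x' = -v`, giving `q` solutions if `v ≠ 0`
and none otherwise. Put `g u = q` if `u = 0` and `g u = #{x * x' = 1 + u}` otherwise; then the
count is `∑ g u * g v - q²`, and `∑ g = q² + 1` because the hyperbolas `x * x' = c` partition `F²`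
and `x * x' = 1` has `q - 1` points. So the count is `(q² + 1)² - q² = q⁴ + q² + 1`.
-/

section LinearEquation

variable {G₀ : Type*} [GroupWithZero G₀]

theorem Nat.card_mul_eq_of_ne_zero {b : G₀} (hb : b ≠ 0) (c : G₀) :
    Nat.card {y : G₀ // b * y = c} = 1 :=
  Nat.card_eq_one_iff_exists.mpr
    ⟨⟨b⁻¹ * c, mul_inv_cancel_left₀ hb c⟩, fun y => Subtype.ext ((eq_inv_mul_iff_mul_eq₀ hb).2 y.2)⟩

theorem Nat.card_zero_mul_eq_of_ne_zero {c : G₀} (hc : c ≠ 0) :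
    Nat.card {y : G₀ // 0 * y = c} = 0 := by
  simp [Ne.symm hc]

end LinearEquation

section HalfSystem

variable {F : Type*} [Field F]

theorem Nat.card_mul_eq_one :
    Nat.card {p : F × F // p.1 * p.2 = 1} = Nat.card F - 1 := by
  rw [← Nat.card_units, Nat.card_congr ((unitsEquivProdSubtype F).trans
    (Equiv.subtypeEquivRight fun p => by rw [mul_comm p.2, and_self]))]

theorem sum_card_mul_eq [Fintype F] :
    ∑ c : F, Nat.card {p : F × F // p.1 * p.2 = c} = Nat.card F ^ 2 := by
  rw [← Nat.card_sigma, Nat.card_congr (Equiv.sigmaFiberEquiv _), Nat.card_prod, sq]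

abbrev HalfSol (u v : F) : Type _ :=
  {t : F × F × F // t.1 * t.2.1 = 1 + u ∧ u * t.2.2 = 1 + t.1 * v}

theorem card_halfSol_of_ne_zero {u : F} (hu : u ≠ 0) (v : F) :
    Nat.card (HalfSol u v) = Nat.card {p : F × F // p.1 * p.2 = 1 + u} :=
  Nat.card_congr
    { toFun t := ⟨(t.1.1, t.1.2.1), t.2.1⟩
      invFun p := ⟨(p.1.1, p.1.2, u⁻¹ * (1 + p.1.1 * v)), p.2, mul_inv_cancel_left₀ hu _⟩
      left_inv t := Subtype.ext <| Prod.ext rfl <| Prod.ext rfl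
        ((eq_inv_mul_iff_mul_eq₀ hu).2 t.2.2).symm
      right_inv _ := rfl }

theorem card_halfSol_zero (v : F) :
    Nat.card (HalfSol 0 v) = Nat.card {x : F // v * x = -1} * Nat.card F := by
  rw [← Nat.card_prod]
  refine Nat.card_congr
    { toFun t := (⟨t.1.1, ?_⟩, t.1.2.2)
      invFun p := ⟨(p.1.1, -v, p.2), ?_, ?_⟩
      left_inv t := Subtype.ext <| Prod.ext rfl <| Prod.ext ?_ rfl
      right_inv _ := rfl }
  · linear_combination -t.2.2
  · linear_combination -p.1.2
  · linear_combination -p.1.2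
  · linear_combination v * t.2.1 + t.1.2.1 * t.2.2

theorem card_halfSol [DecidableEq F] (u v : F) :
    Nat.card (HalfSol u v) =
      if u = 0 then (if v = 0 then 0 else Nat.card F)
      else Nat.card {p : F × F // p.1 * p.2 = 1 + u} := by
  split_ifs with hu hv
  · subst hu hv
    rw [card_halfSol_zero, Nat.card_zero_mul_eq_of_ne_zero (neg_ne_zero.2 one_ne_zero), zero_mul]
  · subst hu
    rw [card_halfSol_zero, Nat.card_mul_eq_of_ne_zero hv, one_mul]
  · exact card_halfSol_of_ne_zero hu v

theorem sum_card_halfSol_mul_card_halfSol [Fintype F] :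
    ∑ w : F × F, Nat.card (HalfSol w.1 w.2) * Nat.card (HalfSol w.2 w.1) =
      Nat.card F ^ 4 + Nat.card F ^ 2 + 1 := by
  classical
  set q := Nat.card F
  set h : F → ℕ := fun c => Nat.card {p : F × F // p.1 * p.2 = c}
  set g : F → ℕ := fun u => if u = 0 then q else h (1 + u)
  have hq : 0 < q := Nat.card_pos
  have sum_g : ∑ u, g u = q ^ 2 + 1 := by
    have shift : ∀ u, g u + (if u = 0 then h 1 else 0) = h (1 + u) + (if u = 0 then q else 0) := by
      intro u
      by_cases hu : u = 0 <;> simp [g, hu, add_comm]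
    have sum_h : ∑ u, h (1 + u) = q ^ 2 :=
      (Equiv.sum_comp (Equiv.addLeft (1 : F)) h).trans sum_card_mul_eq
    have := Finset.sum_congr rfl fun u (_ : u ∈ Finset.univ) => shift u
    rw [Finset.sum_add_distrib, Finset.sum_add_distrib, Finset.sum_ite_eq', Finset.sum_ite_eq',
      sum_h] at this
    simp only [Finset.mem_univ, if_true, h, Nat.card_mul_eq_one] at this
    omega
  have sum_gg : ∑ w : F × F, g w.1 * g w.2 = (q ^ 2 + 1) ^ 2 := by
    rw [Fintype.sum_prod_type' (fun u v => g u * g v), ← Finset.sum_mul_sum, sum_g, ← sq]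
  have pair : ∀ w : F × F, Nat.card (HalfSol w.1 w.2) * Nat.card (HalfSol w.2 w.1) +
      (if w = 0 then q ^ 2 else 0) = g w.1 * g w.2 := by
    rintro ⟨u, v⟩
    simp only [card_halfSol, g, h]
    by_cases hu : u = 0 <;> by_cases hv : v = 0 <;>
      simp [q, hu, hv, sq, mul_comm, -Nat.card_eq_fintype_card]
  have := Finset.sum_congr rfl fun w (_ : w ∈ Finset.univ) => pair w
  rw [Finset.sum_add_distrib, Finset.sum_ite_eq', sum_gg] at this
  simp only [Finset.mem_univ, if_true] at this
  nlinarith [this]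

end HalfSystem

def a4SolEquivSigmaHalfSol (F : Type*) [Field F] :
    {p : (Fin 4 → F) × (Fin 4 → F) //
      p.1 0 * p.2 0 = 1 + p.1 1 ∧
      p.1 1 * p.2 1 = 1 + p.1 0 * p.1 2 ∧
      p.1 2 * p.2 2 = 1 + p.1 1 * p.1 3 ∧
      p.1 3 * p.2 3 = 1 + p.1 2} ≃
      Σ w : F × F, HalfSol w.1 w.2 × HalfSol w.2 w.1 where
  toFun p :=
    ⟨(p.1.1 1, p.1.1 2), ⟨(p.1.1 0, p.1.2 0, p.1.2 1), p.2.1, p.2.2.1⟩,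
      ⟨(p.1.1 3, p.1.2 3, p.1.2 2), p.2.2.2.2, by rw [p.2.2.2.1, mul_comm (p.1.1 1)]⟩⟩
  invFun s :=
    ⟨(![s.2.1.1.1, s.1.1, s.1.2, s.2.2.1.1], ![s.2.1.1.2.1, s.2.1.1.2.2, s.2.2.1.2.2, s.2.2.1.2.1]),
      s.2.1.2.1, s.2.1.2.2, by simp [s.2.2.2.2, mul_comm], s.2.2.2.1⟩
  left_inv p := by
    ext i <;> fin_cases i <;> rfl
  right_inv _ := rfl

-- variables as a pair of functions: p.1 i = xᵢ₊₁, p.2 i = x'ᵢ₊₁ (0-indexed)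
theorem stmt_3 (F : Type*) [Field F] [Fintype F] :
    Nat.card {p : (Fin 4 → F) × (Fin 4 → F) //
      p.1 0 * p.2 0 = 1 + p.1 1 ∧
      p.1 1 * p.2 1 = 1 + p.1 0 * p.1 2 ∧
      p.1 2 * p.2 2 = 1 + p.1 1 * p.1 3 ∧
      p.1 3 * p.2 3 = 1 + p.1 2} =
    Fintype.card F ^ 4 + Fintype.card F ^ 2 + 1 := by
  rw [Nat.card_congr (a4SolEquivSigmaHalfSol F), Nat.card_sigma, ← Nat.card_eq_fintype_card]
  simp only [Nat.card_prod]
  exact sum_card_halfSol_mul_card_halfSol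
end

section
/- Let F = F_q be a finite field. For each n ≥ 1 and α ∈ F, let N_{A_n}(α) denote the number of solutions in F^{2n} of the system x_i·x_i' = 1 + c_i·x_{i-1}·x_{i+1} for 1 ≤ i ≤ n, where c_1 = α, c_i = 1 for i ≥ 2, and x_0 = x_{n+1} = 1 by convention. Then for every n ≥ 1, the sum over all α ∈ F_q^* of N_{A_n}(α) equals (q^{n+2} + (-1)^{n+1})/(q+1). -/
/-- Extension of `x : Fin n → F` to all of `ℕ`, with value `1` outside `{1, …, n}`
(1-indexed: `extA x k = x (k-1)` for `1 ≤ k ≤ n`). -/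
def extA {F : Type*} [One F] {n : ℕ} (x : Fin n → F) (k : ℕ) : F :=
  if h : 1 ≤ k ∧ k ≤ n then x ⟨k - 1, by omega⟩ else 1

/-- Number of points over `F` of the type `Aₙ` variety `X_{Aₙ}(α, 1, …, 1)`:
solutions of `xₖ xₖ' = 1 + cₖ x_{k-1} x_{k+1}` with `c₁ = α`, `cₖ = 1` otherwise,
and the convention `x₀ = x_{n+1} = 1`. -/
noncomputable def NA (F : Type*) [Field F] (n : ℕ) (α : F) : ℕ :=
  Nat.card {p : (Fin n → F) × (Fin n → F) //
    ∀ k, 1 ≤ k → k ≤ n →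
      extA p.1 k * extA p.2 k =
        1 + (if k = 1 then α else 1) * extA p.1 (k - 1) * extA p.1 (k + 1)}

/-!
Split off the first coordinates `(x₁, x₁')`. If `x₁ = a ≠ 0`, then `x₁'` is determined and the
remaining coordinates solve the system of length `n - 1` with parameter `a`. If `x₁ = 0`, then `x₁'`
is free, the first equation forces `x₂ = -α⁻¹`, the second then forces `x₂' = -α`, and the remaining
coordinates solve the system of length `n - 2` with parameter `-α⁻¹`. Summing over `α ≠ 0`, the
sums `S n = ∑_{α ≠ 0} N_{A_n}(α)` satisfy `S (n + 2) = (q - 1) S (n + 1) + q S n`, whose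
characteristic roots are `q` and `-1`; the initial values `S 0 = q - 1` and `S 1 = q² - q + 1`
single out `(q ^ (n + 2) + (-1) ^ (n + 1)) / (q + 1)`.
-/

section extA

variable {F : Type*} [One F] {n : ℕ}

@[simp]
lemma extA_zero (x : Fin n → F) : extA x 0 = 1 := by
  simp [extA]

@[simp]
lemma extA_fin_zero (x : Fin 0 → F) (k : ℕ) : extA x k = 1 := by
  simp only [extA]
  exact dif_neg (by omega)

@[simp]
lemma extA_cons_one (a : F) (x : Fin n → F) : extA (Fin.cons a x : Fin (n + 1) → F) 1 = a := by
  simp [extA]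

lemma extA_cons_succ (a : F) (x : Fin n → F) {k : ℕ} (hk : 1 ≤ k) :
    extA (Fin.cons a x : Fin (n + 1) → F) (k + 1) = extA x k := by
  obtain ⟨j, rfl⟩ := Nat.exists_eq_add_of_le' hk
  by_cases hj : j + 1 ≤ n
  · simp only [extA]
    rw [dif_pos (show 1 ≤ j + 1 + 1 ∧ j + 1 + 1 ≤ n + 1 by omega),
      dif_pos (show 1 ≤ j + 1 ∧ j + 1 ≤ n by omega)]
    exact Fin.cons_succ (α := fun _ => F) a x ⟨j, by omega⟩
  · simp only [extA]
    rw [dif_neg (show ¬(1 ≤ j + 1 + 1 ∧ j + 1 + 1 ≤ n + 1) by omega),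
      dif_neg (show ¬(1 ≤ j + 1 ∧ j + 1 ≤ n) by omega)]

lemma extA_cons_of_pos (a : F) (x : Fin n → F) {k : ℕ} (hk : 1 ≤ k) :
    extA (Fin.cons a x : Fin (n + 1) → F) k = if k = 1 then a else extA x (k - 1) := by
  obtain ⟨j, rfl⟩ := Nat.exists_eq_add_of_le' hk
  split_ifs with h
  · simp [h]
  · exact extA_cons_succ a x (by omega)

end extA

def SolA {F : Type*} [Field F] {n : ℕ} (α : F) (p : (Fin n → F) × (Fin n → F)) : Prop :=
  ∀ k, 1 ≤ k → k ≤ n →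
    extA p.1 k * extA p.2 k = 1 + (if k = 1 then α else 1) * extA p.1 (k - 1) * extA p.1 (k + 1)

section SolA

variable {F : Type*} [Field F] {n : ℕ}

lemma NA_eq_natCard_solA (α : F) :
    NA F n α = Nat.card {p : (Fin n → F) × (Fin n → F) // SolA α p} :=
  rfl

lemma solA_fin_zero (α : F) (p : (Fin 0 → F) × (Fin 0 → F)) : SolA α p :=
  fun _ hk hk0 => absurd hk (by omega)

lemma NA_zero (α : F) : NA F 0 α = 1 := by
  simp [NA_eq_natCard_solA, solA_fin_zero]

lemma solA_cons_iff {β a a' : F} {x x' : Fin n → F} :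
    SolA β ((Fin.cons a x : Fin (n + 1) → F), (Fin.cons a' x' : Fin (n + 1) → F)) ↔
      a * a' = 1 + β * extA x 1 ∧ SolA a (x, x') := by
  have head : extA (Fin.cons a x : Fin (n + 1) → F) 2 = extA x 1 := extA_cons_succ a x le_rfl
  have tail : ∀ k, 1 ≤ k →
      (extA (Fin.cons a x : Fin (n + 1) → F) (k + 1) *
          extA (Fin.cons a' x' : Fin (n + 1) → F) (k + 1) =
        1 + (if k + 1 = 1 then β else 1) * extA (Fin.cons a x : Fin (n + 1) → F) (k + 1 - 1) *
          extA (Fin.cons a x : Fin (n + 1) → F) (k + 1 + 1) ↔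
      extA x k * extA x' k = 1 + (if k = 1 then a else 1) * extA x (k - 1) * extA x (k + 1)) := by
    intro k hk
    rw [extA_cons_succ _ _ hk, extA_cons_succ _ _ hk, extA_cons_succ _ _ (by omega),
      Nat.add_sub_cancel, extA_cons_of_pos _ _ hk, if_neg (by omega)]
    split_ifs with h <;> simp [h]
  constructor
  · intro h
    refine ⟨by simpa [head] using h 1 le_rfl (by omega), fun k hk hkn => ?_⟩
    exact (tail k hk).1 (h (k + 1) (by omega) (by omega))
  · rintro ⟨h1, h⟩ k hk hkn
    obtain rfl | ⟨j, rfl, hj⟩ : k = 1 ∨ ∃ j, k = j + 1 ∧ 1 ≤ j := by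
      by_cases hk1 : k = 1
      exacts [Or.inl hk1, Or.inr ⟨k - 1, by omega, by omega⟩]
    · simpa [head] using h1
    · exact (tail j hj).2 (h j hj (by omega))

end SolA

def consPairsEquiv (F : Type*) (n : ℕ) :
    F × F × ((Fin n → F) × (Fin n → F)) ≃ (Fin (n + 1) → F) × (Fin (n + 1) → F) where
  toFun r := (Fin.cons r.1 r.2.2.1, Fin.cons r.2.1 r.2.2.2)
  invFun p := (p.1 0, p.2 0, Fin.tail p.1, Fin.tail p.2)
  left_inv r := by simp
  right_inv p := by simp

section count

variable {F : Type*} [Field F]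

lemma natCard_mul_eq_and_of_ne_zero {Q : Type*} {a : F} (ha : a ≠ 0) (c : Q → F) (P : Q → Prop) :
    Nat.card {r : F × Q // a * r.1 = c r.2 ∧ P r.2} = Nat.card {q // P q} :=
  Nat.card_congr
    { toFun r := ⟨r.1.2, r.2.2⟩
      invFun q := ⟨(c q / a, q), mul_div_cancel₀ _ ha, q.2⟩
      left_inv r := by
        ext
        · exact ((eq_div_iff_mul_eq ha).2 (by rw [mul_comm, r.2.1])).symm
        · rfl
      right_inv q := rfl }

lemma natCard_zero_mul_eq_and {Q : Type*} (c : Q → F) (P : Q → Prop) :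
    Nat.card {r : F × Q // 0 * r.1 = c r.2 ∧ P r.2} =
      Nat.card F * Nat.card {q // c q = 0 ∧ P q} := by
  rw [← Nat.card_prod]
  exact Nat.card_congr
    { toFun r := (r.1.1, ⟨r.1.2, by simpa [eq_comm] using r.2⟩)
      invFun s := ⟨(s.1, s.2.1), by simpa [eq_comm] using s.2.2⟩
      left_inv r := rfl
      right_inv s := rfl }

variable (F) in
/-- Up to the free coordinate `x₁'`, these are the solutions of the system of length `n + 1` and
parameter `β` with `x₁ = 0`. -/
noncomputable def NA₀ (n : ℕ) (β : F) : ℕ :=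
  Nat.card {q : (Fin n → F) × (Fin n → F) // 1 + β * extA q.1 1 = 0 ∧ SolA 0 q}

lemma NA₀_zero [DecidableEq F] (β : F) : NA₀ F 0 β = if β = -1 then 1 else 0 := by
  have hβ : 1 + β = 0 ↔ β = -1 := by rw [add_comm, add_eq_zero_iff_eq_neg]
  split_ifs with h <;> simp [NA₀, solA_fin_zero, hβ, h]

lemma NA_succ [Fintype F] [DecidableEq F] (n : ℕ) (β : F) :
    NA F (n + 1) β = ∑ a ∈ ({0}ᶜ : Finset F), NA F n a + Fintype.card F * NA₀ F n β := by
  have split : {p : (Fin (n + 1) → F) × (Fin (n + 1) → F) // SolA β p} ≃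
      Σ a : F, {s : F × ((Fin n → F) × (Fin n → F)) //
        a * s.1 = 1 + β * extA s.2.1 1 ∧ SolA a s.2} :=
    ((consPairsEquiv F n).subtypeEquiv fun _ => solA_cons_iff.symm).symm.trans
      (Equiv.subtypeProdEquivSigmaSubtype fun (a : F) (s : F × ((Fin n → F) × (Fin n → F))) =>
        a * s.1 = 1 + β * extA s.2.1 1 ∧ SolA a s.2)
  rw [NA_eq_natCard_solA, Nat.card_congr split, Nat.card_sigma, Fintype.sum_eq_add_sum_compl 0,
    add_comm, natCard_zero_mul_eq_and (fun q => 1 + β * extA q.1 1) (SolA 0),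
    Nat.card_eq_fintype_card, NA₀]
  congr 1
  refine Finset.sum_congr rfl fun a ha => ?_
  exact natCard_mul_eq_and_of_ne_zero (by simpa using ha) (fun q => 1 + β * extA q.1 1) (SolA a)

lemma NA₀_succ {n : ℕ} {β : F} (hβ : β ≠ 0) : NA₀ F (n + 1) β = NA F n (-β⁻¹) := by
  have key : ∀ a a' : F, 1 + β * a = 0 ∧ a * a' = 1 ↔ a = -β⁻¹ ∧ a' = -β := by
    intro a a'
    constructor
    · rintro ⟨h1, h2⟩
      have ha : a = -β⁻¹ := by field_simp; linear_combination h1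
      subst ha
      refine ⟨rfl, ?_⟩
      field_simp at h2
      linear_combination -h2
    · rintro ⟨rfl, rfl⟩
      exact ⟨by field_simp; ring, by field_simp⟩
  have hcons : ∀ r : F × F × ((Fin n → F) × (Fin n → F)),
      ((r.1 = -β⁻¹ ∧ r.2.1 = -β) ∧ SolA (-β⁻¹) r.2.2) ↔
        (1 + β * extA (consPairsEquiv F n r).1 1 = 0 ∧ SolA 0 (consPairsEquiv F n r)) := by
    rintro ⟨a, a', q⟩
    simp only [consPairsEquiv, Equiv.coe_fn_mk, extA_cons_one, solA_cons_iff, zero_mul, add_zero,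
      ← and_assoc, key]
    exact and_congr_right fun h => h.1 ▸ Iff.rfl
  exact Nat.card_congr (((consPairsEquiv F n).subtypeEquiv hcons).symm.trans
    { toFun r := ⟨r.1.2.2, r.2.2⟩
      invFun q := ⟨(-β⁻¹, -β, q), ⟨rfl, rfl⟩, q.2⟩
      left_inv r := Subtype.ext (Prod.ext r.2.1.1.symm (Prod.ext r.2.1.2.symm rfl))
      right_inv q := rfl })

variable [Fintype F] [DecidableEq F]

lemma intCast_card_compl_zero : ((({0}ᶜ : Finset F)).card : ℤ) = Fintype.card F - 1 := by
  rw [Finset.card_compl, Finset.card_singleton, Nat.cast_sub Fintype.card_pos, Nat.cast_one]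

lemma sum_NA_zero : ∑ α ∈ ({0}ᶜ : Finset F), (NA F 0 α : ℤ) = Fintype.card F - 1 := by
  simp [NA_zero, intCast_card_compl_zero]

lemma sum_NA_succ (n : ℕ) :
    ∑ β ∈ ({0}ᶜ : Finset F), (NA F (n + 1) β : ℤ) =
      (Fintype.card F - 1) * ∑ a ∈ ({0}ᶜ : Finset F), (NA F n a : ℤ) +
        Fintype.card F * ∑ β ∈ ({0}ᶜ : Finset F), (NA₀ F n β : ℤ) := by
  simp_rw [NA_succ, Nat.cast_add, Nat.cast_mul, Nat.cast_sum]
  rw [Finset.sum_add_distrib, Finset.sum_const, ← Finset.mul_sum, nsmul_eq_mul,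
    intCast_card_compl_zero]

lemma sum_NA₀_zero : ∑ β ∈ ({0}ᶜ : Finset F), (NA₀ F 0 β : ℤ) = 1 := by
  simp [NA₀_zero]

lemma sum_NA₀_succ (n : ℕ) :
    ∑ β ∈ ({0}ᶜ : Finset F), (NA₀ F (n + 1) β : ℤ) = ∑ β ∈ ({0}ᶜ : Finset F), (NA F n β : ℤ) := by
  rw [Finset.sum_congr rfl fun β hβ => by rw [NA₀_succ (by simpa using hβ)]]
  refine Finset.sum_nbij' (fun β => -β⁻¹) (fun β => -β⁻¹) ?_ ?_ ?_ ?_ ?_ <;> intro β hβ <;>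
    simp_all

end count

lemma mul_add_one_eq_of_linearRec {q : ℤ} {S : ℕ → ℤ} (h0 : S 0 = q - 1)
    (h1 : S 1 = (q - 1) * S 0 + q) (h : ∀ n, S (n + 2) = (q - 1) * S (n + 1) + q * S n) (n : ℕ) :
    S n * (q + 1) = q ^ (n + 2) + (-1) ^ (n + 1) := by
  induction n using Nat.twoStepInduction with
  | zero => rw [h0]; ring
  | one => rw [h1, h0]; ring
  | more n ih₀ ih₁ => rw [h n]; linear_combination (q - 1) * ih₁ + q * ih₀

theorem stmt_6_general (F : Type*) [Field F] [Fintype F] [DecidableEq F] (n : ℕ) :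
    (∑ α ∈ ({0}ᶜ : Finset F), (NA F n α : ℤ)) * (Fintype.card F + 1) =
      (Fintype.card F : ℤ) ^ (n + 2) + (-1) ^ (n + 1) := by
  refine mul_add_one_eq_of_linearRec (S := fun n => ∑ α ∈ ({0}ᶜ : Finset F), (NA F n α : ℤ))
    sum_NA_zero ?_ (fun n => ?_) n
  · rw [sum_NA_succ, sum_NA₀_zero, mul_one]
  · rw [sum_NA_succ, sum_NA₀_succ]

theorem stmt_6 (F : Type*) [Field F] [Fintype F] [DecidableEq F] (n : ℕ) (hn : 1 ≤ n) :
    (∑ α ∈ ({0}ᶜ : Finset F), (NA F n α : ℤ)) * (Fintype.card F + 1) =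
      (Fintype.card F : ℤ) ^ (n + 2) + (-1) ^ (n + 1) :=
  stmt_6_general F n
end

section
/- Let F_q be a finite field with q elements and n ≥ 1. The number of solutions (α, x₁,…,x_n, x₁',…,x_n') ∈ F_q^{2n+1} of the system x₁x₁' = 1 + α x₂, x_i x_i' = 1 + x_{i-1} x_{i+1} (2 ≤ i ≤ n-1), x_n x_n' = 1 + x_{n-1} (with the convention that for n = 1 the only equation is x₁x₁' = 1 + α) equals q^{n+1}. -/
namespace Stmt7

variable {F : Type*} [Field F]

def E (n : ℕ) (α : F) (x x' : Fin n → F) : Prop :=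
  ∀ k, 1 ≤ k → k ≤ n →
    extA x k * extA x' k = 1 + (if k = 1 then α else 1) * extA x (k - 1) * extA x (k + 1)

lemma extA_zero {n : ℕ} (x : Fin n → F) : extA x 0 = 1 := by simp [extA]

lemma extA_one {n : ℕ} (x : Fin (n+1) → F) : extA x 1 = x 0 := by
  simp [extA]

lemma extA_succ {n : ℕ} (x : Fin (n+1) → F) (k : ℕ) (hk : 1 ≤ k) :
    extA x (k+1) = extA (Fin.tail x) k := by
  unfold extA
  by_cases h : k ≤ n
  · rw [dif_pos ⟨by omega, by omega⟩, dif_pos ⟨hk, h⟩]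
    show x _ = x (Fin.succ _)
    congr 1
    ext
    simp only [Fin.val_succ]
    omega
  · rw [dif_neg (by omega), dif_neg (by omega)]

lemma extA_pred {n : ℕ} (x : Fin (n+1) → F) (k : ℕ) (hk : 2 ≤ k) :
    extA (Fin.tail x) (k-1) = extA x k := by
  have h := extA_succ x (k-1) (by omega)
  rw [show k - 1 + 1 = k from by omega] at h
  exact h.symm

end Stmt7

namespace Stmt7
variable {F : Type*} [Field F]

lemma E_cons {n : ℕ} (α : F) (x x' : Fin (n+1) → F) :
    E (n+1) α x x' ↔
      x 0 * x' 0 = 1 + α * extA (Fin.tail x) 1 ∧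
        E n (x 0) (Fin.tail x) (Fin.tail x') := by
  constructor
  · intro h
    refine ⟨?_, ?_⟩
    · have h1 := h 1 le_rfl (by omega)
      rw [if_pos rfl, extA_one, extA_one, show (1:ℕ) - 1 = 0 from rfl, extA_zero,
        extA_succ x 1 le_rfl] at h1
      linear_combination h1
    · intro k hk hkn
      have h2 := h (k+1) (by omega) (by omega)
      rw [if_neg (by omega), show k + 1 - 1 = k from rfl,
        extA_succ x k hk, extA_succ x' k hk, extA_succ x (k+1) (by omega)] at h2
      by_cases hk1 : k = 1
      · subst hk1
        rw [if_pos rfl, show (1:ℕ) - 1 = 0 from rfl, extA_zero]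
        rw [extA_one] at h2
        linear_combination h2
      · rw [if_neg hk1, extA_pred x k (by omega)] at *
        -- careful: extA_pred rewrites extA (tail x) (k-1) into extA x k; goal has that
        linear_combination h2
  · rintro ⟨h1, h2⟩ k hk hkn
    by_cases hk1 : k = 1
    · subst hk1
      rw [if_pos rfl, extA_one, extA_one, show (1:ℕ) - 1 = 0 from rfl, extA_zero,
        extA_succ x 1 le_rfl]
      linear_combination h1
    · obtain ⟨j, rfl⟩ : ∃ j, k = j + 1 := ⟨k - 1, by omega⟩
      have hj : 1 ≤ j := by omega
      have h3 := h2 j hj (by omega)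
      rw [if_neg hk1, show j + 1 - 1 = j from rfl,
        extA_succ x j hj, extA_succ x' j hj, extA_succ x (j+1) (by omega)]
      by_cases hj1 : j = 1
      · subst hj1
        rw [if_pos rfl, show (1:ℕ) - 1 = 0 from rfl, extA_zero] at h3
        rw [extA_one]
        linear_combination h3
      · rw [if_neg hj1] at h3
        rw [← extA_pred x j (by omega)]
        linear_combination h3

end Stmt7

namespace Stmt7
variable {F : Type*} [Field F]

/-- Total count at level `n` (α free). -/
noncomputable def Sc (F : Type*) [Field F] (n : ℕ) : ℕ :=
  Nat.card {p : F × (Fin n → F) × (Fin n → F) // E n p.1 p.2.1 p.2.2}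

/-- Count with `α ≠ 0`. -/
noncomputable def Tc (F : Type*) [Field F] (n : ℕ) : ℕ :=
  Nat.card {p : F × (Fin n → F) × (Fin n → F) // E n p.1 p.2.1 p.2.2 ∧ p.1 ≠ 0}

lemma card_split {γ : Type*} [Finite γ] (P Q : γ → Prop) :
    Nat.card {x // P x} = Nat.card {x // P x ∧ Q x} + Nat.card {x // P x ∧ ¬ Q x} := by
  classical
  rw [← Nat.card_sum]
  refine Nat.card_congr ?_
  exact ((Equiv.sumCompl (fun x : {x // P x} => Q x.1)).symm.trans
    (Equiv.sumCongr (Equiv.subtypeSubtypeEquivSubtypeInter P Q)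
      (Equiv.subtypeSubtypeEquivSubtypeInter P (fun x => ¬ Q x))))

/-- The `α = 0` part of level `n+1` is in bijection with the `β ≠ 0` part of level `n`. -/
lemma card_alpha_zero (n : ℕ) :
    Nat.card {p : F × (Fin (n+1) → F) × (Fin (n+1) → F) //
        E (n+1) p.1 p.2.1 p.2.2 ∧ p.1 = 0} = Tc F n := by
  refine Nat.card_congr ⟨fun p => ⟨(p.1.2.1 0, Fin.tail p.1.2.1, Fin.tail p.1.2.2), ?_⟩,
    fun q => ⟨(0, Fin.cons q.1.1 q.1.2.1, Fin.cons q.1.1⁻¹ q.1.2.2), ?_⟩, ?_, ?_⟩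
  · obtain ⟨h1, h2⟩ := (E_cons _ _ _).mp p.2.1
    have hα := p.2.2
    rw [hα, zero_mul, add_zero] at h1
    exact ⟨h2, left_ne_zero_of_mul_eq_one h1⟩
  · have hE := q.2.1
    have hβ : q.1.1 ≠ 0 := q.2.2
    refine ⟨(E_cons _ _ _).mpr ⟨?_, ?_⟩, rfl⟩
    · simp only [Fin.cons_zero, Fin.tail_cons, zero_mul, add_zero]
      exact mul_inv_cancel₀ hβ
    · simp only [Fin.cons_zero, Fin.tail_cons]
      exact hE
  · intro p
    obtain ⟨h1, h2⟩ := (E_cons _ _ _).mp p.2.1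
    have hα := p.2.2
    rw [hα, zero_mul, add_zero] at h1
    have hx0 : p.1.2.1 0 ≠ 0 := left_ne_zero_of_mul_eq_one h1
    have hx' : p.1.2.2 0 = (p.1.2.1 0)⁻¹ := by
      field_simp
      linear_combination h1
    apply Subtype.ext
    show (0, Fin.cons (p.1.2.1 0) (Fin.tail p.1.2.1),
      Fin.cons (p.1.2.1 0)⁻¹ (Fin.tail p.1.2.2)) = p.1
    refine Prod.ext hα.symm (Prod.ext (Fin.cons_self_tail _) ?_)
    rw [← hx']
    exact Fin.cons_self_tail _
  · intro q
    apply Subtype.ext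
    dsimp only
    simp only [Fin.cons_zero, Fin.tail_cons]

end Stmt7

namespace Stmt7
variable {F : Type*} [Field F]

/-- The `x₁ ≠ 0` part of level `n+1`: `α` is free, `x₁'` determined. -/
noncomputable def equiv_x_ne (n : ℕ) :
    {p : F × (Fin (n+1) → F) × (Fin (n+1) → F) //
        E (n+1) p.1 p.2.1 p.2.2 ∧ p.2.1 0 ≠ 0} ≃
      F × {p : F × (Fin n → F) × (Fin n → F) // E n p.1 p.2.1 p.2.2 ∧ p.1 ≠ 0} := by
  refine ⟨fun p => (p.1.1, ⟨(p.1.2.1 0, Fin.tail p.1.2.1, Fin.tail p.1.2.2), ?_⟩),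
    fun q => ⟨(q.1, Fin.cons q.2.1.1 q.2.1.2.1,
      Fin.cons (q.2.1.1⁻¹ * (1 + q.1 * extA q.2.1.2.1 1)) q.2.1.2.2), ?_⟩, ?_, ?_⟩
  · exact ⟨((E_cons _ _ _).mp p.2.1).2, p.2.2⟩
  · have hβ : q.2.1.1 ≠ 0 := q.2.2.2
    refine ⟨(E_cons _ _ _).mpr ⟨?_, ?_⟩, ?_⟩
    · simp only [Fin.cons_zero, Fin.tail_cons]
      rw [← mul_assoc, mul_inv_cancel₀ hβ, one_mul]
    · simp only [Fin.cons_zero, Fin.tail_cons]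
      exact q.2.2.1
    · simpa using hβ
  · intro p
    obtain ⟨h1, h2⟩ := (E_cons _ _ _).mp p.2.1
    have hx0 : p.1.2.1 0 ≠ 0 := p.2.2
    have hx' : p.1.2.2 0 = (p.1.2.1 0)⁻¹ * (1 + p.1.1 * extA (Fin.tail p.1.2.1) 1) := by
      field_simp
      linear_combination h1
    apply Subtype.ext
    show (p.1.1, Fin.cons (p.1.2.1 0) (Fin.tail p.1.2.1),
      Fin.cons ((p.1.2.1 0)⁻¹ * (1 + p.1.1 * extA (Fin.tail p.1.2.1) 1)) (Fin.tail p.1.2.2)) = p.1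
    refine Prod.ext rfl (Prod.ext (Fin.cons_self_tail _) ?_)
    rw [← hx']
    exact Fin.cons_self_tail _
  · intro q
    refine Prod.ext rfl (Subtype.ext ?_)
    dsimp only
    simp only [Fin.cons_zero, Fin.tail_cons]

end Stmt7

namespace Stmt7
variable {F : Type*} [Field F]

/-- The `x₁ = 0` part of level `n+2`: `x₁'` is free; `α = -x₂⁻¹`, `x₂' = x₂⁻¹` determined. -/
noncomputable def equiv_x_eq (n : ℕ) :
    {p : F × (Fin (n+2) → F) × (Fin (n+2) → F) //
        E (n+2) p.1 p.2.1 p.2.2 ∧ p.2.1 0 = 0} ≃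
      F × {p : F × (Fin n → F) × (Fin n → F) // E n p.1 p.2.1 p.2.2 ∧ p.1 ≠ 0} := by
  refine ⟨fun p => (p.1.2.2 0, ⟨(Fin.tail p.1.2.1 0, Fin.tail (Fin.tail p.1.2.1),
      Fin.tail (Fin.tail p.1.2.2)), ?_⟩),
    fun q => ⟨(-q.2.1.1⁻¹, Fin.cons 0 (Fin.cons q.2.1.1 q.2.1.2.1),
      Fin.cons q.1 (Fin.cons q.2.1.1⁻¹ q.2.1.2.2)), ?_⟩, ?_, ?_⟩
  · obtain ⟨h1, h2⟩ := (E_cons _ _ _).mp p.2.1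
    obtain ⟨h21, h22⟩ := (E_cons _ _ _).mp h2
    have hx0 : p.1.2.1 0 = 0 := p.2.2
    rw [hx0, zero_mul] at h1
    rw [extA_one] at h1
    have hγ : Fin.tail p.1.2.1 0 ≠ 0 := by
      intro h
      rw [h, mul_zero, add_zero] at h1
      exact one_ne_zero h1.symm
    exact ⟨h22, hγ⟩
  · have hγ : q.2.1.1 ≠ 0 := q.2.2.2
    refine ⟨(E_cons _ _ _).mpr ⟨?_, (E_cons _ _ _).mpr ⟨?_, ?_⟩⟩, ?_⟩
    · simp only [Fin.cons_zero, Fin.tail_cons, zero_mul, extA_one]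
      rw [neg_mul, inv_mul_cancel₀ hγ]
      ring
    · simp only [Fin.cons_zero, Fin.tail_cons, zero_mul, add_zero]
      exact mul_inv_cancel₀ hγ
    · simp only [Fin.cons_zero, Fin.tail_cons]
      exact q.2.2.1
    · simp only [Fin.cons_zero]
  · intro p
    obtain ⟨h1, h2⟩ := (E_cons _ _ _).mp p.2.1
    obtain ⟨h21, h22⟩ := (E_cons _ _ _).mp h2
    have hx0 : p.1.2.1 0 = 0 := p.2.2
    rw [hx0, zero_mul] at h1
    rw [extA_one] at h1
    rw [hx0, zero_mul, add_zero] at h21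
    have hγ : Fin.tail p.1.2.1 0 ≠ 0 := by
      intro h
      rw [h, mul_zero, add_zero] at h1
      exact one_ne_zero h1.symm
    have hα : p.1.1 = -(Fin.tail p.1.2.1 0)⁻¹ := by
      field_simp
      linear_combination -h1
    have hx2' : Fin.tail p.1.2.2 0 = (Fin.tail p.1.2.1 0)⁻¹ := by
      field_simp
      linear_combination h21
    apply Subtype.ext
    show (-(Fin.tail p.1.2.1 0)⁻¹,
      Fin.cons 0 (Fin.cons (Fin.tail p.1.2.1 0) (Fin.tail (Fin.tail p.1.2.1))),
      Fin.cons (p.1.2.2 0) (Fin.cons (Fin.tail p.1.2.1 0)⁻¹ (Fin.tail (Fin.tail p.1.2.2)))) = p.1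
    have e2 : Fin.cons (0:F) (Fin.cons (Fin.tail p.1.2.1 0) (Fin.tail (Fin.tail p.1.2.1)))
        = p.1.2.1 := by
      rw [Fin.cons_self_tail]
      conv_rhs => rw [← Fin.cons_self_tail p.1.2.1]
      rw [hx0]
    have e3 : Fin.cons (p.1.2.2 0)
        (Fin.cons (Fin.tail p.1.2.1 0)⁻¹ (Fin.tail (Fin.tail p.1.2.2))) = p.1.2.2 := by
      rw [← hx2', Fin.cons_self_tail, Fin.cons_self_tail]
    exact Prod.ext hα.symm (Prod.ext e2 e3)
  · intro q
    refine Prod.ext ?_ (Subtype.ext ?_) <;> dsimp only <;>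
      simp only [Fin.cons_zero, Fin.tail_cons]

end Stmt7

namespace Stmt7
variable {F : Type*} [Field F]

noncomputable def equiv_one :
    {p : F × (Fin 1 → F) × (Fin 1 → F) // E 1 p.1 p.2.1 p.2.2} ≃ F × F := by
  refine ⟨fun p => (p.1.2.1 0, p.1.2.2 0),
    fun q => ⟨(q.1 * q.2 - 1, fun _ => q.1, fun _ => q.2), ?_⟩, ?_, ?_⟩
  · refine (E_cons _ _ _).mpr ⟨?_, ?_⟩
    · have : extA (Fin.tail (fun _ : Fin 1 => q.1)) 1 = 1 := by simp [extA]
      rw [this]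
      ring
    · intro k hk hkn
      omega
  · intro p
    obtain ⟨h1, h2⟩ := (E_cons _ _ _).mp p.2
    have he : extA (Fin.tail p.1.2.1) 1 = 1 := by simp [extA]
    rw [he, mul_one] at h1
    apply Subtype.ext
    show (p.1.2.1 0 * p.1.2.2 0 - 1, fun _ => p.1.2.1 0, fun _ => p.1.2.2 0) = p.1
    refine Prod.ext (by linear_combination h1) (Prod.ext ?_ ?_) <;>
      · funext i
        rw [Subsingleton.elim i 0]
  · intro q
    rfl

variable [Fintype F]

lemma Sc_one : Sc F 1 = Fintype.card F ^ 2 := by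
  rw [Sc, Nat.card_congr equiv_one, Nat.card_prod, Nat.card_eq_fintype_card, sq]

lemma Sc_split (n : ℕ) : Sc F (n+1) = Tc F n + Tc F (n+1) := by
  rw [Sc, card_split (fun p : F × (Fin (n+1) → F) × (Fin (n+1) → F) =>
    E (n+1) p.1 p.2.1 p.2.2) (fun p => p.1 = 0), card_alpha_zero]
  rfl

lemma Sc_step (n : ℕ) : Sc F (n+2) = Fintype.card F * Sc F (n+1) := by
  rw [Sc, card_split (fun p : F × (Fin (n+2) → F) × (Fin (n+2) → F) =>
    E (n+2) p.1 p.2.1 p.2.2) (fun p => p.2.1 0 = 0)]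
  have h1 : Nat.card {p : F × (Fin (n+2) → F) × (Fin (n+2) → F) //
      E (n+2) p.1 p.2.1 p.2.2 ∧ p.2.1 0 = 0} = Fintype.card F * Tc F n := by
    rw [Nat.card_congr (equiv_x_eq n), Nat.card_prod, Nat.card_eq_fintype_card, Tc]
  have h2 : Nat.card {p : F × (Fin (n+2) → F) × (Fin (n+2) → F) //
      E (n+2) p.1 p.2.1 p.2.2 ∧ ¬ p.2.1 0 = 0} = Fintype.card F * Tc F (n+1) := by
    rw [Nat.card_congr (equiv_x_ne (n+1)), Nat.card_prod, Nat.card_eq_fintype_card, Tc]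
  rw [h1, h2, Sc_split, Nat.mul_add]

lemma Sc_main (n : ℕ) : Sc F (n+1) = Fintype.card F ^ (n+2) := by
  induction n with
  | zero => exact Sc_one
  | succ m ih => rw [Sc_step, ih, pow_succ]; ring

end Stmt7

theorem stmt_7 (F : Type*) [Field F] [Fintype F] (n : ℕ) (hn : 1 ≤ n) :
    Nat.card {p : F × (Fin n → F) × (Fin n → F) //
      ∀ k, 1 ≤ k → k ≤ n →
        extA p.2.1 k * extA p.2.2 k =
          1 + (if k = 1 then p.1 else 1) * extA p.2.1 (k - 1) * extA p.2.1 (k + 1)} =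
    Fintype.card F ^ (n + 1) := by
  obtain ⟨m, rfl⟩ : ∃ m, n = m + 1 := ⟨n - 1, by omega⟩
  exact Stmt7.Sc_main m
end

section
/- Let F_q be a finite field, n ≥ 4 even, and α, β ∈ F_q^* with α ≠ β, α ≠ (-1)^{n/2}, β ≠ (-1)^{n/2}. The number of solutions in F_q^{2n} of the type D_n system x₁x₁' = 1 + α x₃, x₂x₂' = 1 + β x₃, x₃x₃' = 1 + x₁x₂x₄, x_i x_i' = 1 + x_{i-1}x_{i+1} (4 ≤ i ≤ n-1), x_n x_n' = 1 + x_{n-1} equals (q^{n/2} - 1)². -/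
/-- Number of points over `F` of the type `Dₙ` variety `X_{Dₙ}(α, β, 1, …, 1)`:
`x₁x₁' = 1 + α x₃`, `x₂x₂' = 1 + β x₃`, `x₃x₃' = 1 + x₁x₂x₄`,
`xₖxₖ' = 1 + x_{k-1}x_{k+1}` for `4 ≤ k ≤ n-1`, `xₙxₙ' = 1 + x_{n-1}`,
with the convention `x_{n+1} = 1`. -/
noncomputable def ND (F : Type*) [Field F] (n : ℕ) (α β : F) : ℕ :=
  Nat.card {p : (Fin n → F) × (Fin n → F) //
    ∀ k, 1 ≤ k → k ≤ n →
      extA p.1 k * extA p.2 k =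
        if k = 1 then 1 + α * extA p.1 3
        else if k = 2 then 1 + β * extA p.1 3
        else if k = 3 then 1 + extA p.1 1 * extA p.1 2 * extA p.1 4
        else 1 + extA p.1 (k - 1) * extA p.1 (k + 1)}

/-!
For fixed `x = (x₁, …, xₙ)` the equations are independent linear equations `x_k x_k' = r_k(x)`
in the `x_k'`, each with `1` solution if `x_k ≠ 0` and `q` or `0` solutions if `x_k = 0`; so
the count is a sum over `x` of a product of such local counts.

Slice by `t = x₃`. The variables `x₄, …, xₙ` form a type `A_{n-3}` chain with boundary value
`t`, whose count `c_r(a)` satisfies `c_{r+2}(a) = ∑_{b ≠ 0} c_{r+1}(b) + q c_r(-a⁻¹)` for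
`a ≠ 0`; this gives `c_{2s}(a) = 1 + q² + ⋯ + q^{2s}` and
`c_{2s+1}(a) = (q^{s+2} - 1)(q^{s+1} - 1)/(q² - 1)`, except for an extra `q^{s+1}` at
`a = (-1)^{s+1}`. For `t ≠ 0` the variables `x₁, x₂` contribute
`(q - 1 + q[t = -α⁻¹])(q - 1 + q[t = -β⁻¹])`, while the slice `t = 0` contributes
`(q - 1) q ∑_{u ≠ 0} c_{n-4}(u)`. The hypotheses on `α, β` make the three special points
`-α⁻¹, -β⁻¹, (-1)^{n/2-1}` distinct, and the total collapses to `(q^{n/2} - 1)²`.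
-/

open Finset

section Tuple

variable {R : Type*}

lemma extA_add_one [One R] {n : ℕ} (x : Fin n → R) (i : Fin n) : extA x (i + 1) = x i := by
  simp [extA]

@[simp]
lemma extA_one [One R] {n : ℕ} (x : Fin (n + 1) → R) : extA x 1 = x 0 := by
  simp [extA]

lemma extA_of_lt [One R] {n k : ℕ} (x : Fin n → R) (h : n < k) : extA x k = 1 := by
  rw [extA, dif_neg (by omega)]

@[simp]
lemma extA_cons_add_two [One R] {n : ℕ} (b : R) (z : Fin n → R) (k : ℕ) :
    extA (Fin.cons b z : Fin (n + 1) → R) (k + 2) = extA z (k + 1) := by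
  by_cases hk : k + 1 ≤ n
  · rw [extA, dif_pos ⟨by omega, by omega⟩, extA, dif_pos ⟨by omega, hk⟩]
    exact Fin.cons_succ (α := fun _ => R) b z ⟨k, by omega⟩
  · rw [extA, dif_neg (by omega), extA, dif_neg (by omega)]

lemma forall_extA_iff [One R] {n : ℕ} (y : Fin n → R) (Q : ℕ → R → Prop) :
    (∀ k, 1 ≤ k → k ≤ n → Q k (extA y k)) ↔ ∀ i : Fin n, Q (i + 1) (y i) := by
  refine ⟨fun h i => by simpa [extA_add_one] using h (i + 1) (by omega) i.2, fun h k hk hkn => ?_⟩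
  obtain ⟨i, rfl⟩ : ∃ i : Fin n, k = i + 1 := ⟨⟨k - 1, by omega⟩, by simp; omega⟩
  simpa [extA_add_one] using h i

lemma sum_pi_fin_succ [Fintype R] {M : Type*} [AddCommMonoid M] {r : ℕ}
    (f : (Fin (r + 1) → R) → M) :
    ∑ y, f y = ∑ b, ∑ z : Fin r → R, f (Fin.cons b z) := by
  rw [← (Fin.consEquiv fun _ => R).sum_comp, Fintype.sum_prod_type]
  rfl

end Tuple

section IndicatorSums

variable {ι M : Type*} [DecidableEq ι] [CommRing M]

lemma intCast_card_univ_erase [Fintype ι] (a : ι) :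
    (#(univ.erase a) : ℤ) = Fintype.card ι - 1 := by
  rw [card_erase_of_mem (mem_univ a), card_univ, Nat.cast_sub (Fintype.card_pos_iff.2 ⟨a⟩),
    Nat.cast_one]

lemma sum_add_ite_eq (s : Finset ι) (K R : M) {e : ι} (he : e ∈ s) :
    ∑ a ∈ s, (K + if a = e then R else 0) = #s * K + R := by
  rw [sum_add_distrib, sum_const, nsmul_eq_mul, sum_ite_eq', if_pos he]

lemma sum_mul_mul_add_ite_eq (s : Finset ι) {a b e : ι} (ha : a ∈ s) (hb : b ∈ s)
    (he : e ∈ s) (hab : a ≠ b) (hae : a ≠ e) (hbe : b ≠ e) (c d K R : M) :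
    ∑ t ∈ s, (c + if t = a then d else 0) * (c + if t = b then d else 0) *
        (K + if t = e then R else 0) = #s * c ^ 2 * K + 2 * c * d * K + c ^ 2 * R := by
  have hpt : ∀ t, (c + if t = a then d else 0) * (c + if t = b then d else 0) *
      (K + if t = e then R else 0) = c ^ 2 * K + ((if t = a then c * d * K else 0) +
        ((if t = b then c * d * K else 0) + if t = e then c ^ 2 * R else 0)) := by
    intro t
    split_ifs <;> subst_vars <;> first | ring1 | simp_all
  simp only [hpt, sum_add_distrib, sum_const, nsmul_eq_mul, sum_ite_eq', ha, hb, he, if_true]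
  ring

end IndicatorSums

section SolCount

variable {F : Type*}

noncomputable def solCount [Mul F] (x c : F) : ℕ :=
  Nat.card {y : F // x * y = c}

variable [Field F]

lemma solCount_of_ne_zero {x : F} (hx : x ≠ 0) (c : F) : solCount x c = 1 := by
  rw [solCount, Nat.card_eq_one_iff_exists]
  refine ⟨⟨x⁻¹ * c, by field_simp⟩, fun ⟨y, hy⟩ => ?_⟩
  ext
  simp [← hy, hx]

lemma one_add_mul_eq_zero_iff {a : F} (ha : a ≠ 0) (c : F) : 1 + a * c = 0 ↔ c = -a⁻¹ := by
  constructor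
  · intro h
    field_simp
    linear_combination h
  · rintro rfl
    field_simp
    ring

lemma neg_inv_eq_neg_one_pow_iff {a : F} (k : ℕ) : -a⁻¹ = (-1) ^ k ↔ a = (-1) ^ (k + 1) := by
  rw [neg_eq_iff_eq_neg, inv_eq_iff_eq_inv, pow_succ, mul_neg_one, inv_neg, ← inv_pow, inv_neg_one]

variable [Fintype F] [DecidableEq F]

lemma solCount_zero_left (c : F) : solCount 0 c = if c = 0 then Fintype.card F else 0 := by
  split_ifs with hc
  · simp [solCount, hc, Nat.card_eq_fintype_card]
  · simp [solCount, Ne.symm hc]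

lemma solCount_one (x : F) : solCount x 1 = if x = 0 then 0 else 1 := by
  split_ifs with hx
  · simp [hx, solCount_zero_left]
  · exact solCount_of_ne_zero hx 1

lemma sum_solCount (c : F) :
    (∑ x, solCount x c : ℤ) =
      Fintype.card F - 1 + if c = 0 then (Fintype.card F : ℤ) else 0 := by
  rw [← add_sum_erase _ _ (mem_univ 0), solCount_zero_left,
    sum_congr rfl fun x hx => by rw [solCount_of_ne_zero (ne_of_mem_erase hx)]]
  push_cast
  rw [sum_const, nsmul_one, intCast_card_univ_erase]
  ring

lemma sum_solCount_one_add_mul {γ : F} (hγ : γ ≠ 0) (t : F) :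
    (∑ x, solCount x (1 + γ * t) : ℤ) =
      Fintype.card F - 1 + if t = -γ⁻¹ then (Fintype.card F : ℤ) else 0 := by
  simp only [sum_solCount, one_add_mul_eq_zero_iff hγ]

lemma sum_solCount_one_mul (f : F → ℕ) :
    ∑ x, solCount x 1 * f x = ∑ x ∈ univ.erase 0, f x := by
  rw [← add_sum_erase _ _ (mem_univ 0), solCount_one, if_pos rfl, zero_mul, zero_add]
  exact sum_congr rfl fun x hx => by rw [solCount_of_ne_zero (ne_of_mem_erase hx), one_mul]

end SolCount

section System

variable {F : Type*} [Field F]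

noncomputable def rhsD (α β : F) {n : ℕ} (x : Fin n → F) (k : ℕ) : F :=
  if k = 1 then 1 + α * extA x 3
  else if k = 2 then 1 + β * extA x 3
  else if k = 3 then 1 + extA x 1 * extA x 2 * extA x 4
  else 1 + extA x (k - 1) * extA x (k + 1)

lemma ND_eq_sum_prod [Fintype F] (n : ℕ) (α β : F) :
    ND F n α β =
      ∑ x : Fin n → F, ∏ k ∈ range n, solCount (extA x (k + 1)) (rhsD α β x (k + 1)) := by
  refine (Nat.card_congr (Equiv.subtypeProdEquivSigmaSubtype fun x y =>
    ∀ k, 1 ≤ k → k ≤ n → extA x k * extA y k = rhsD α β x k)).trans ?_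
  rw [Nat.card_sigma]
  refine sum_congr rfl fun x _ => ?_
  rw [← Fin.prod_univ_eq_prod_range (fun k => solCount (extA x (k + 1)) (rhsD α β x (k + 1))),
    Nat.card_congr ((Equiv.subtypeEquivRight fun y =>
      forall_extA_iff y fun k c => extA x k * c = rhsD α β x k).trans
      (Equiv.subtypePiEquivPi
        (p := fun (i : Fin n) c => extA x (i + 1) * c = rhsD α β x (i + 1)))),
    Nat.card_pi]
  rfl

end System

section Chain

variable {F : Type*} [Field F]

/-- The number of `y` solving the type `A_r` chain `x_j y_j = 1 + x_{j-1} x_{j+1}` (`1 ≤ j ≤ r`)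
for `x_j = w j`, where `w 0` is a fixed boundary value and `x_{r+1} = 1`. -/
noncomputable def chainProd {r : ℕ} (w : Fin (r + 1) → F) : ℕ :=
  ∏ j ∈ range r, solCount (extA w (j + 2)) (1 + extA w (j + 1) * extA w (j + 3))

noncomputable def chainCount (F : Type*) [Field F] [Fintype F] (r : ℕ) (a : F) : ℕ :=
  ∑ z : Fin r → F, chainProd (Fin.cons a z : Fin (r + 1) → F)

lemma chainProd_cons_cons {r : ℕ} (a b : F) (z : Fin r → F) :
    chainProd (Fin.cons a (Fin.cons b z) : Fin (r + 2) → F) =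
      solCount b (1 + a * extA z 1) * chainProd (Fin.cons b z : Fin (r + 1) → F) := by
  rw [chainProd, prod_range_succ', chainProd, mul_comm]
  simp

variable [Fintype F]

lemma chainCount_zero (a : F) : chainCount F 0 a = 1 := by
  simp [chainCount, chainProd]

variable [DecidableEq F]

lemma chainCount_one (a : F) :
    (chainCount F 1 a : ℤ) =
      Fintype.card F - 1 + if a = -1 then (Fintype.card F : ℤ) else 0 := by
  have hprod : ∀ z : Fin 1 → F, chainProd (Fin.cons a z : Fin 2 → F) = solCount (z 0) (1 + a) := by
    intro z
    simp [chainProd, extA_of_lt]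
  rw [chainCount, Nat.cast_sum, sum_congr rfl fun z _ => by rw [hprod z],
    Fintype.sum_equiv (Equiv.funUnique (Fin 1) F) (fun z => (solCount (z 0) (1 + a) : ℤ))
      (fun b => (solCount b (1 + a) : ℤ)) fun _ => rfl,
    sum_solCount]
  simp only [add_eq_zero_iff_eq_neg']

/-- Split on `x₁`: if `x₁ ≠ 0` its equation has one solution, while `x₁ = 0` forces
`x₂ = -a⁻¹`, leaves `q` choices of `x₁'`, and turns the equation of `x₂` into `x₂ x₂' = 1`. -/
lemma chainCount_add_two {a : F} (ha : a ≠ 0) (r : ℕ) :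
    chainCount F (r + 2) a =
      ∑ b ∈ univ.erase 0, chainCount F (r + 1) b + Fintype.card F * chainCount F r (-a⁻¹) := by
  rw [chainCount, sum_pi_fin_succ, ← add_sum_erase _ _ (mem_univ 0), add_comm]
  simp_rw [chainProd_cons_cons]
  congr 1
  · refine sum_congr rfl fun b hb => sum_congr rfl fun z _ => ?_
    rw [solCount_of_ne_zero (ne_of_mem_erase hb), one_mul]
  · have hpt : ∀ c (z : Fin r → F),
        solCount 0 (1 + a * extA (Fin.cons c z : Fin (r + 1) → F) 1) *
          (solCount c (1 + 0 * extA z 1) * chainProd (Fin.cons c z : Fin (r + 1) → F)) =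
        if c = -a⁻¹ then Fintype.card F * chainProd (Fin.cons c z : Fin (r + 1) → F) else 0 := by
      intro c z
      simp only [extA_one, Fin.cons_zero, solCount_zero_left, one_add_mul_eq_zero_iff ha,
        zero_mul, add_zero]
      split_ifs with hc
      · rw [solCount_of_ne_zero (by simpa [hc] using ha), one_mul]
      · rw [zero_mul]
    rw [sum_pi_fin_succ]
    simp_rw [chainProd_cons_cons, hpt]
    rw [sum_comm, chainCount, mul_sum]
    simp

lemma chainCount_closed_form (s : ℕ) :
    (∀ a : F, a ≠ 0 → ((Fintype.card F : ℤ) ^ 2 - 1) * chainCount F (2 * s) a =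
      (Fintype.card F : ℤ) ^ (2 * s + 2) - 1) ∧
    ∀ a : F, a ≠ 0 → ((Fintype.card F : ℤ) ^ 2 - 1) * chainCount F (2 * s + 1) a =
      ((Fintype.card F : ℤ) ^ (s + 2) - 1) * ((Fintype.card F : ℤ) ^ (s + 1) - 1) +
        if a = (-1) ^ (s + 1) then ((Fintype.card F : ℤ) ^ 2 - 1) * Fintype.card F ^ (s + 1)
        else 0 := by
  set q := (Fintype.card F : ℤ) with hq
  have hε : ∀ k, ((-1 : F) ^ k) ≠ 0 := fun k => pow_ne_zero k (neg_ne_zero.2 one_ne_zero)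
  induction s with
  | zero =>
    refine ⟨fun a _ => by simp [chainCount_zero], fun a _ => ?_⟩
    rw [chainCount_one, ← hq]
    simp only [zero_add, pow_one]
    split_ifs <;> ring
  | succ s ih =>
    obtain ⟨ihe, iho⟩ := ih
    have heven : ∀ a : F, a ≠ 0 → (q ^ 2 - 1) * chainCount F (2 * (s + 1)) a =
        q ^ (2 * (s + 1) + 2) - 1 := by
      intro a ha
      have hsum : (q ^ 2 - 1) * ∑ b ∈ univ.erase 0, (chainCount F (2 * s + 1) b : ℤ) =
          (q - 1) * ((q ^ (s + 2) - 1) * (q ^ (s + 1) - 1)) + (q ^ 2 - 1) * q ^ (s + 1) := by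
        rw [mul_sum, sum_congr rfl fun b hb => iho b (ne_of_mem_erase hb),
          sum_add_ite_eq _ _ _ (mem_erase.2 ⟨hε _, mem_univ _⟩), intCast_card_univ_erase]
      have hrec := chainCount_add_two ha (2 * s)
      rw [show 2 * s + 2 = 2 * (s + 1) by ring] at hrec
      rw [hrec]
      push_cast
      linear_combination hsum + q * ihe _ (neg_ne_zero.2 (inv_ne_zero ha))
    refine ⟨heven, fun a ha => ?_⟩
    have hsum : (q ^ 2 - 1) * ∑ b ∈ univ.erase 0, (chainCount F (2 * (s + 1)) b : ℤ) =
        (q - 1) * (q ^ (2 * (s + 1) + 2) - 1) := by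
      rw [mul_sum, sum_congr rfl fun b hb => heven b (ne_of_mem_erase hb), sum_const, nsmul_eq_mul,
        intCast_card_univ_erase]
    have hodd := iho _ (neg_ne_zero.2 (inv_ne_zero ha))
    simp only [neg_inv_eq_neg_one_pow_iff] at hodd
    have hrec := chainCount_add_two ha (2 * s + 1)
    rw [show 2 * s + 1 + 1 = 2 * (s + 1) by ring, show 2 * s + 1 + 2 = 2 * (s + 1) + 1 by ring]
      at hrec
    rw [hrec]
    push_cast
    split_ifs at hodd ⊢
    · linear_combination hsum + q * hodd
    · linear_combination hsum + q * hodd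

end Chain

section Decomposition

variable {F : Type*} [Field F]

lemma prod_rhsD_cons {m : ℕ} (α β x₁ x₂ t : F) (z : Fin (m + 1) → F) :
    ∏ k ∈ range (m + 4), solCount (extA (Fin.cons x₁ (Fin.cons x₂ (Fin.cons t z)) :
        Fin (m + 4) → F) (k + 1)) (rhsD α β (Fin.cons x₁ (Fin.cons x₂ (Fin.cons t z)) :
        Fin (m + 4) → F) (k + 1)) =
      solCount x₁ (1 + α * t) * solCount x₂ (1 + β * t) * solCount t (1 + x₁ * x₂ * extA z 1) *
        chainProd (Fin.cons t z : Fin (m + 2) → F) := by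
  simp [prod_range_succ', rhsD, chainProd]
  ring

variable [Fintype F]

/-- The number of points of the type `D_{m+4}` system with `x₃ = t`; `z` holds `x₄, …, x_{m+4}`. -/
noncomputable def fibreCount (m : ℕ) (α β t : F) : ℕ :=
  ∑ x₁ : F, ∑ x₂ : F, ∑ z : Fin (m + 1) → F,
    solCount x₁ (1 + α * t) * solCount x₂ (1 + β * t) * solCount t (1 + x₁ * x₂ * extA z 1) *
      chainProd (Fin.cons t z : Fin (m + 2) → F)

lemma ND_add_four_eq_sum_fibreCount (m : ℕ) (α β : F) :
    ND F (m + 4) α β = ∑ t, fibreCount m α β t := by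
  simp only [ND_eq_sum_prod, sum_pi_fin_succ (r := m + 3), sum_pi_fin_succ (r := m + 2),
    sum_pi_fin_succ (r := m + 1), prod_rhsD_cons]
  rw [sum_congr rfl fun x₁ _ => sum_comm, sum_comm]
  rfl

lemma fibreCount_of_ne_zero (m : ℕ) (α β : F) {t : F} (ht : t ≠ 0) :
    fibreCount m α β t =
      (∑ x₁, solCount x₁ (1 + α * t)) * (∑ x₂, solCount x₂ (1 + β * t)) *
        chainCount F (m + 1) t := by
  simp_rw [fibreCount, solCount_of_ne_zero ht, mul_one, chainCount, ← mul_sum, ← sum_mul,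
    sum_mul_sum]

variable [DecidableEq F]

lemma sum_sum_solCount_one_mul_solCount_zero {u : F} (hu : u ≠ 0) :
    ∑ x₁, ∑ x₂, solCount x₁ 1 * solCount x₂ 1 * solCount 0 (1 + x₁ * x₂ * u) =
      #(univ.erase (0 : F)) * Fintype.card F := by
  simp_rw [mul_assoc, ← mul_sum, sum_solCount_one_mul]
  rw [← smul_eq_mul, ← sum_const]
  refine sum_congr rfl fun x₁ hx₁ => ?_
  have hx₁u : x₁ * u ≠ 0 := mul_ne_zero (ne_of_mem_erase hx₁) hu
  simp_rw [← mul_assoc, mul_right_comm x₁, solCount_zero_left, one_add_mul_eq_zero_iff hx₁u]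
  rw [sum_ite_eq', if_pos (mem_erase.2 ⟨neg_ne_zero.2 (inv_ne_zero hx₁u), mem_univ _⟩)]

lemma fibreCount_zero (m : ℕ) (α β : F) :
    fibreCount m α β 0 =
      #(univ.erase (0 : F)) * Fintype.card F * ∑ u ∈ univ.erase 0, chainCount F m u := by
  simp only [fibreCount, mul_zero, add_zero, sum_pi_fin_succ (r := m), extA_one, Fin.cons_zero,
    chainProd_cons_cons, zero_mul]
  rw [mul_sum, ← sum_solCount_one_mul, sum_congr rfl fun x₁ _ => sum_comm, sum_comm]
  refine sum_congr rfl fun u _ => ?_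
  by_cases hu : u = 0
  · simp [hu, solCount_one]
  · simp_rw [solCount_of_ne_zero hu, one_mul, ← mul_sum, ← sum_mul,
      ← sum_sum_solCount_one_mul_solCount_zero hu, chainCount]

lemma ND_add_four_eq {α β : F} (hα : α ≠ 0) (hβ : β ≠ 0) (m : ℕ) :
    (ND F (m + 4) α β : ℤ) =
      ∑ t ∈ univ.erase 0, (Fintype.card F - 1 + if t = -α⁻¹ then (Fintype.card F : ℤ) else 0) *
        (Fintype.card F - 1 + if t = -β⁻¹ then (Fintype.card F : ℤ) else 0) *
          chainCount F (m + 1) t +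
      (Fintype.card F - 1) * Fintype.card F * ∑ u ∈ univ.erase 0, (chainCount F m u : ℤ) := by
  rw [ND_add_four_eq_sum_fibreCount, ← add_sum_erase _ _ (mem_univ 0), add_comm,
    fibreCount_zero]
  push_cast
  rw [intCast_card_univ_erase]
  congr 1
  refine sum_congr rfl fun t ht => ?_
  rw [fibreCount_of_ne_zero m α β (ne_of_mem_erase ht)]
  push_cast
  rw [sum_solCount_one_add_mul hα, sum_solCount_one_add_mul hβ]

end Decomposition

theorem stmt_15 (F : Type*) [Field F] [Fintype F] (n : ℕ) (hn : 4 ≤ n) (heven : Even n)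
    (α β : F) (hα : α ≠ 0) (hβ : β ≠ 0) (hαβ : α ≠ β)
    (hα' : α ≠ (-1) ^ (n / 2)) (hβ' : β ≠ (-1) ^ (n / 2)) :
    (ND F n α β : ℤ) = ((Fintype.card F : ℤ) ^ (n / 2) - 1) ^ 2 := by
  classical
  obtain ⟨s, rfl⟩ : ∃ s, n = 2 * s + 4 := ⟨n / 2 - 2, by obtain ⟨k, rfl⟩ := heven; omega⟩
  rw [show (2 * s + 4) / 2 = s + 2 by omega] at hα' hβ' ⊢
  have hq : (1 : ℤ) < Fintype.card F := by exact_mod_cast Fintype.one_lt_card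
  set q := (Fintype.card F : ℤ)
  have hinv : ∀ {γ : F}, γ ≠ 0 → γ ≠ (-1) ^ (s + 2) → -γ⁻¹ ≠ (-1) ^ (s + 1) := fun hγ hγ' h =>
    hγ' ((neg_inv_eq_neg_one_pow_iff _).1 h)
  obtain ⟨hcc_even, hcc_odd⟩ := chainCount_closed_form (F := F) s
  have hodd : (q ^ 2 - 1) * ∑ t ∈ univ.erase 0, (q - 1 + if t = -α⁻¹ then q else 0) *
      (q - 1 + if t = -β⁻¹ then q else 0) * (chainCount F (2 * s + 1) t : ℤ) =
      (q - 1) ^ 3 * ((q ^ (s + 2) - 1) * (q ^ (s + 1) - 1)) +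
        2 * (q - 1) * q * ((q ^ (s + 2) - 1) * (q ^ (s + 1) - 1)) +
        (q - 1) ^ 2 * ((q ^ 2 - 1) * q ^ (s + 1)) := by
    rw [mul_sum, sum_congr rfl fun t ht => by rw [mul_left_comm, hcc_odd t (ne_of_mem_erase ht)],
      sum_mul_mul_add_ite_eq _ (by simpa) (by simpa) (by simp) (by simpa using hαβ) (hinv hα hα')
        (hinv hβ hβ'), intCast_card_univ_erase]
    ring
  have heven : (q ^ 2 - 1) * ∑ u ∈ univ.erase 0, (chainCount F (2 * s) u : ℤ) =
      (q - 1) * (q ^ (2 * s + 2) - 1) := by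
    rw [mul_sum, sum_congr rfl fun u hu => hcc_even u (ne_of_mem_erase hu), sum_const, nsmul_eq_mul,
      intCast_card_univ_erase]
  refine mul_left_cancel₀ (show q ^ 2 - 1 ≠ 0 by nlinarith) ?_
  rw [ND_add_four_eq hα hβ]
  linear_combination hodd + (q - 1) * q * heven
end

section
/- Let F_q be a finite field with q elements. The number of solutions in F_q^{16} of the type E_8 system (all coefficients 1): x₁x₁' = 1+x₂, x₂x₂' = 1+x₁x₃, x₃x₃' = 1+x₂x₄x₈, x₄x₄' = 1+x₃x₅, x₅x₅' = 1+x₄x₆, x₆x₆' = 1+x₅x₇, x₇x₇' = 1+x₆, x₈x₈' = 1+x₃ equals q⁸ + q⁶ + q⁵ + q⁴ + q³ + q² + 1. -/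
/-!
Write `N(a, b)` for the number of `z` with `a z = b`, so that the number of solutions is
`∑ₓ ∏ᵢ N(xᵢ, rᵢ(x))`, with `rᵢ(x)` the right-hand side of the `i`-th equation. The E₈ diagram is a
star with centre 3 and arms 2–1, 4–5–6–7 and 8, and the sum is evaluated one arm at a time.

Let `S_n(b)` count the solutions on a path of `n + 1` vertices hanging off a vertex of value `b`.
When the first vertex `y` of the path is nonzero, its equation fixes `y'` and leaves a shorter path
hanging off `y`; when `y = 0`, it forces the next vertex to be `-1/b`. This gives
`∑_b S_n(b) = q^(n+2)` and a recursion from which `S₁(c) = q² + 1` and `S₃(c) = q⁴ + q² + 1` for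
`c ≠ 0`, while `S_n(0) = q^(n+1) - q^n + ⋯ ± 1`. At the centre, a nonzero value `c` decouples the
arms and contributes `S₁(c) S₃(c) S₀(c)`; the value `c = 0` forces `x₂ x₄ x₈ = -1`, a constraint
that the one-vertex arm 8 absorbs, and contributes `q S₁(0) S₃(0)`.
-/

open Finset

section

variable {F : Type*} [Field F]

noncomputable def fiberCard (a b : F) : ℤ := Nat.card {z : F // a * z = b}

theorem fiberCard_of_ne_zero {a : F} (ha : a ≠ 0) (b : F) : fiberCard a b = 1 := by
  have : Nat.card {z : F // a * z = b} = 1 :=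
    Nat.card_eq_one_iff_exists.2 ⟨⟨a⁻¹ * b, by field_simp⟩,
      fun z => Subtype.ext ((eq_inv_mul_iff_mul_eq₀ ha).2 z.2)⟩
  simp [fiberCard, this]

variable [Fintype F]

local notation "q" => (Fintype.card F : ℤ)

theorem card_solutions_eq_sum_prod {ι : Type*} [Fintype ι] [DecidableEq ι]
    (r : (ι → F) → ι → F) :
    (Nat.card {p : (ι → F) × (ι → F) // ∀ i, p.1 i * p.2 i = r p.1 i} : ℤ) =
      ∑ x, ∏ i, fiberCard (x i) (r x i) := by
  rw [Nat.card_congr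
    ((Equiv.subtypeProdEquivSigmaSubtype fun (x y : ι → F) => ∀ i, x i * y i = r x i).trans
      (Equiv.sigmaCongrRight fun x => Equiv.subtypePiEquivPi (p := fun i z => x i * z = r x i))),
    Nat.card_sigma]
  simp [Nat.card_pi, fiberCard]

/-- `armCount n a y` counts the solutions of the equations of a path `y₀ — y₁ — ⋯ — yₙ` whose
first vertex `y₀ = y` has one further neighbour, of value `a`, outside the path:
`y₀ y₀' = 1 + a y₁`, `yᵢ yᵢ' = 1 + yᵢ₋₁ yᵢ₊₁` and `yₙ yₙ' = 1 + yₙ₋₁`. -/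
noncomputable def armCount : ℕ → F → F → ℤ
  | 0, a, y => fiberCard y (1 + a)
  | n + 1, a, y => ∑ z, fiberCard y (1 + a * z) * armCount n y z

noncomputable def armTotal (n : ℕ) (b : F) : ℤ := ∑ y, armCount n b y

theorem armCount_succ_of_ne_zero (n : ℕ) (a : F) {y : F} (hy : y ≠ 0) :
    armCount (n + 1) a y = armTotal n y := by
  simp [armCount, armTotal, fiberCard_of_ne_zero hy]

variable (F) in
noncomputable def starCount (i k : ℕ) : ℤ :=
  ∑ c : F, ∑ u, ∑ v, ∑ w,
    fiberCard c (1 + u * v * w) * armCount i c u * armCount k c v * armCount 0 c w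

def e8Rhs (x : Fin 8 → F) : Fin 8 → F :=
  ![1 + x 1, 1 + x 0 * x 2, 1 + x 1 * x 3 * x 7, 1 + x 2 * x 4, 1 + x 3 * x 5, 1 + x 4 * x 6,
    1 + x 5, 1 + x 2]

def e8Coords : F × F × F × F × F × F × F × F ≃ (Fin 8 → F) where
  toFun t := ![t.2.2.2.2.2.2.2, t.2.1, t.1, t.2.2.1, t.2.2.2.2.1, t.2.2.2.2.2.1, t.2.2.2.2.2.2.1,
    t.2.2.2.1]
  invFun x := (x 2, x 1, x 3, x 7, x 4, x 5, x 6, x 0)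
  left_inv _ := rfl
  right_inv x := by ext i; fin_cases i <;> rfl

theorem sum_prod_fiberCard_e8Rhs :
    ∑ x : Fin 8 → F, ∏ i, fiberCard (x i) (e8Rhs x i) = starCount F 1 3 := by
  rw [← e8Coords.sum_comp]
  simp only [Fintype.sum_prod_type, Fin.prod_univ_eight]
  change ∑ c : F, ∑ u : F, ∑ v : F, ∑ w : F, ∑ x₅ : F, ∑ x₆ : F, ∑ x₇ : F, ∑ x₁ : F,
    fiberCard x₁ (1 + u) * fiberCard u (1 + x₁ * c) * fiberCard c (1 + u * v * w) *
      fiberCard v (1 + c * x₅) * fiberCard x₅ (1 + v * x₆) * fiberCard x₆ (1 + x₅ * x₇) *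
      fiberCard x₇ (1 + x₆) * fiberCard w (1 + c) = _
  simp only [starCount, armCount, mul_sum, sum_mul]
  refine sum_congr rfl fun c _ => ?_
  iterate 7 refine sum_congr rfl fun _ _ => ?_
  rw [mul_comm _ c]
  ring

variable [DecidableEq F]

theorem fiberCard_zero_left (b : F) : fiberCard 0 b = if b = 0 then q else 0 := by
  split_ifs with hb
  · simp [fiberCard, hb, Nat.card_eq_fintype_card]
  · simp [fiberCard, eq_comm, hb]

theorem sum_fiberCard_left (b : F) : ∑ y, fiberCard y b = q - 1 + if b = 0 then q else 0 := by
  rw [← add_sum_erase _ _ (mem_univ 0), fiberCard_zero_left,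
    sum_congr rfl fun y hy => fiberCard_of_ne_zero (ne_of_mem_erase hy) b, sum_const,
    card_erase_of_mem (mem_univ _), card_univ, nsmul_one, Nat.cast_pred Fintype.card_pos]
  ring

theorem sum_fiberCard_zero_one_add_mul (b : F) (g : F → ℤ) :
    ∑ z, fiberCard 0 (1 + b * z) * g z = if b = 0 then 0 else q * g (-b⁻¹) := by
  split_ifs with hb
  · simp [hb, fiberCard_zero_left]
  · have hroot (z : F) : 1 + b * z = 0 ↔ z = -b⁻¹ := by grind
    simp_rw [fiberCard_zero_left, hroot, ite_mul, zero_mul, sum_ite_eq']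
    simp

theorem armCount_zero_zero (n : ℕ) : armCount n (0 : F) 0 = 0 := by
  cases n with
  | zero => simp [armCount, fiberCard_zero_left]
  | succ n => rw [armCount, sum_fiberCard_zero_one_add_mul, if_pos rfl]

/-- For `a = 0` both sides vanish, the right-hand one because `0⁻¹ = 0`. -/
theorem armCount_succ_zero (n : ℕ) (a : F) :
    armCount (n + 1) a 0 = q * armCount n 0 (-a⁻¹) := by
  rw [armCount, sum_fiberCard_zero_one_add_mul]
  split_ifs with ha
  · simp [ha, armCount_zero_zero]
  · rfl

theorem armTotal_zero (b : F) : armTotal 0 b = q - 1 + if b = -1 then q else 0 := by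
  simp only [armTotal, armCount, sum_fiberCard_left, add_eq_zero_iff_eq_neg']

theorem armTotal_succ_eq_add_sum_erase (n : ℕ) (b : F) :
    armTotal (n + 1) b = q * armCount n 0 (-b⁻¹) + ∑ y ∈ univ.erase (0 : F), armTotal n y := by
  rw [armTotal, ← add_sum_erase _ _ (mem_univ 0), armCount_succ_zero]
  congr 1
  exact sum_congr rfl fun y hy => armCount_succ_of_ne_zero n b (ne_of_mem_erase hy)

theorem sum_armTotal (n : ℕ) : ∑ b : F, armTotal n b = q ^ (n + 2) := by
  induction n with
  | zero =>
    simp only [armTotal_zero, sum_add_distrib, sum_const, card_univ, nsmul_eq_mul, sum_ite_eq',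
      mem_univ, if_true]
    ring
  | succ n ih =>
    have hinv : ∑ b : F, armCount n 0 (-b⁻¹) = armTotal n (0 : F) :=
      Fintype.sum_equiv ((Equiv.inv F).trans (Equiv.neg F)) _ _ fun _ => rfl
    simp only [armTotal_succ_eq_add_sum_erase, sum_add_distrib, ← mul_sum, hinv, sum_const,
      card_univ, nsmul_eq_mul, sum_erase_eq_sub (mem_univ _), ih]
    ring

theorem armTotal_succ (n : ℕ) (b : F) :
    armTotal (n + 1) b = q * armCount n 0 (-b⁻¹) + q ^ (n + 2) - armTotal n (0 : F) := by
  rw [armTotal_succ_eq_add_sum_erase, sum_erase_eq_sub (mem_univ _), sum_armTotal]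
  ring

theorem armTotal_succ_zero (n : ℕ) :
    armTotal (n + 1) (0 : F) = q ^ (n + 2) - armTotal n (0 : F) := by
  simp [armTotal_succ, armCount_zero_zero]

theorem armTotal_one_zero : armTotal 1 (0 : F) = q ^ 2 - q + 1 := by
  rw [armTotal_succ_zero, armTotal_zero]
  simp
  ring

theorem armTotal_three_zero : armTotal 3 (0 : F) = q ^ 4 - q ^ 3 + q ^ 2 - q + 1 := by
  rw [armTotal_succ_zero, armTotal_succ_zero, armTotal_one_zero]
  ring

theorem armTotal_one_of_ne_zero {b : F} (hb : b ≠ 0) : armTotal 1 b = q ^ 2 + 1 := by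
  rw [armTotal_succ, armCount, fiberCard_of_ne_zero (by simpa using hb), armTotal_zero]
  simp

theorem armTotal_three_of_ne_zero {b : F} (hb : b ≠ 0) : armTotal 3 b = q ^ 4 + q ^ 2 + 1 := by
  have hb' : -b⁻¹ ≠ 0 := by simpa using hb
  rw [armTotal_succ, armCount_succ_of_ne_zero _ _ hb', armTotal_one_of_ne_zero hb',
    armTotal_succ_zero, armTotal_one_zero]
  ring

theorem starCount_eq (i k : ℕ) :
    starCount F i k = q * armTotal i (0 : F) * armTotal k (0 : F) +
      ∑ c ∈ univ.erase (0 : F), armTotal i c * armTotal k c * armTotal 0 c := by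
  rw [starCount, ← add_sum_erase _ _ (mem_univ 0)]
  congr 1
  · have hw (u v : F) : ∑ w, fiberCard 0 (1 + u * v * w) * armCount i 0 u * armCount k 0 v *
        armCount 0 0 w = q * armCount i 0 u * armCount k 0 v := by
      have hC {y : F} (hy : y ≠ 0) : armCount 0 0 y = 1 := fiberCard_of_ne_zero hy _
      calc _ = armCount i 0 u * armCount k 0 v *
            ∑ w, fiberCard 0 (1 + u * v * w) * armCount 0 0 w := by
            rw [mul_sum]; exact sum_congr rfl fun _ _ => by ring
        _ = _ := by
            rw [sum_fiberCard_zero_one_add_mul]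
            split_ifs with huv
            · rcases mul_eq_zero.1 huv with rfl | rfl <;> simp [armCount_zero_zero]
            · rw [hC (neg_ne_zero.2 (inv_ne_zero huv))]
              ring
    simp_rw [hw, armTotal, mul_assoc, ← mul_sum, ← sum_mul]
  · refine sum_congr rfl fun c hc => ?_
    simp only [fiberCard_of_ne_zero (ne_of_mem_erase hc), one_mul, ← mul_sum, ← sum_mul, armTotal]

theorem starCount_one_three :
    starCount F 1 3 = q ^ 8 + q ^ 6 + q ^ 5 + q ^ 4 + q ^ 3 + q ^ 2 + 1 := by
  have hne : ∑ c ∈ univ.erase (0 : F), armTotal 1 c * armTotal 3 c * armTotal 0 c =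
      (q ^ 2 + 1) * (q ^ 4 + q ^ 2 + 1) * ∑ c ∈ univ.erase (0 : F), armTotal 0 c := by
    rw [mul_sum]
    refine sum_congr rfl fun c hc => ?_
    rw [armTotal_one_of_ne_zero (ne_of_mem_erase hc), armTotal_three_of_ne_zero (ne_of_mem_erase hc)]
  rw [starCount_eq, armTotal_one_zero, armTotal_three_zero, hne, sum_erase_eq_sub (mem_univ _),
    sum_armTotal, armTotal_zero]
  simp
  ring

end

-- p.1 i = xᵢ₊₁ and p.2 i = x'ᵢ₊₁ (0-indexed); vertex 8 (index 7) is attached to vertex 3 (index 2)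
theorem stmt_17 (F : Type*) [Field F] [Fintype F] :
    Nat.card {p : (Fin 8 → F) × (Fin 8 → F) //
      p.1 0 * p.2 0 = 1 + p.1 1 ∧
      p.1 1 * p.2 1 = 1 + p.1 0 * p.1 2 ∧
      p.1 2 * p.2 2 = 1 + p.1 1 * p.1 3 * p.1 7 ∧
      p.1 3 * p.2 3 = 1 + p.1 2 * p.1 4 ∧
      p.1 4 * p.2 4 = 1 + p.1 3 * p.1 5 ∧
      p.1 5 * p.2 5 = 1 + p.1 4 * p.1 6 ∧
      p.1 6 * p.2 6 = 1 + p.1 5 ∧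
      p.1 7 * p.2 7 = 1 + p.1 2} =
    Fintype.card F ^ 8 + Fintype.card F ^ 6 + Fintype.card F ^ 5 +
      Fintype.card F ^ 4 + Fintype.card F ^ 3 + Fintype.card F ^ 2 + 1 := by
  classical
  rw [← Nat.cast_inj (R := ℤ), Nat.card_congr (Equiv.subtypeEquivRight
      (q := fun p : (Fin 8 → F) × (Fin 8 → F) => ∀ i, p.1 i * p.2 i = e8Rhs p.1 i)
      fun p => ⟨fun h i => by fin_cases i <;> simp [e8Rhs, h],
        fun h => ⟨h 0, h 1, h 2, h 3, h 4, h 5, h 6, h 7⟩⟩),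
    card_solutions_eq_sum_prod, sum_prod_fiberCard_e8Rhs, starCount_one_three]
  push_cast
  rfl
end
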